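/- arXiv:1101.5011 — 3 statements merged into one kernel-verified Lean document; each statement's English description precedes it below -/
import Mathlib

section
/- The Euler operator E commutes with D and with L, while Λ E = E Λ + Λ; that is, for every q-function f: E(D f) = D(E f), E(L f) = L(E f), and Λ(E f) = E(Λ f) + Λ f. -/
noncomputable section

/-- The type of candidate local functions: functions of `x` and the jet `(q₀, q₁, …)`. -/
abbrev QFun := ℝ → (ℕ → ℝ) → ℝ

/-- `IsQFunc X m f` : `f` is a q-function of order `m` on `X`: it depends only on
`x, q_0, …, q_m` and is infinitely differentiable for `x ∈ X`, `q_0 > 0`. -/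
def IsQFunc (X : Set ℝ) (m : ℕ) (f : QFun) : Prop :=
  ∃ F : ℝ × (Fin (m + 1) → ℝ) → ℝ,
    ContDiffOn ℝ (⊤ : ℕ∞) F {p : ℝ × (Fin (m + 1) → ℝ) | p.1 ∈ X ∧ 0 < p.2 0} ∧
    ∀ x q, f x q = F (x, fun i => q i.val)

/-- Partial derivative with respect to `x`. -/
def pdx (f : QFun) : QFun := fun x q => deriv (fun t => f t q) x

/-- Partial derivative with respect to `q_j`. -/
def pd (j : ℕ) (f : QFun) : QFun :=
  fun x q => deriv (fun t => f x (Function.update q j t)) (q j)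

/-- The total-derivative operator `D f = ∂f/∂x + Σ_j q_{j+1} ∂f/∂q_j`. -/
def Dop (f : QFun) : QFun :=
  fun x q => pdx f x q + ∑' j : ℕ, q (j + 1) * pd j f x q

/-- The Lagrange operator `Λ f = Σ_k (-1)^k D^k (∂f/∂q_k)`. -/
def Lam (f : QFun) : QFun :=
  fun x q => ∑' k : ℕ, (-1 : ℝ) ^ k * Dop^[k] (pd k f) x q

/-- The operator `L f = Σ_k (-1)^(k+1) D^k (q_0 ∂f/∂q_k)`. -/
def Lop (f : QFun) : QFun :=
  fun x q => ∑' k : ℕ, (-1 : ℝ) ^ (k + 1) * Dop^[k] (fun y p => p 0 * pd k f y p) x q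

/-- The Euler operator `E f = Σ_j q_j ∂f/∂q_j`. -/
def Eop (f : QFun) : QFun := fun x q => ∑' j : ℕ, q j * pd j f x q

/-- The operator `B_r f = Σ_{k ≥ r+1} (-1)^(k-1-r) D^(k-1-r) (∂f/∂q_k)`, for `r ≥ -1`. -/
def Bop (r : ℤ) (f : QFun) : QFun :=
  fun x q => ∑' k : ℕ,
    if r + 1 ≤ (k : ℤ) then
      (-1 : ℝ) ^ ((k : ℤ) - 1 - r).toNat * Dop^[((k : ℤ) - 1 - r).toNat] (pd k f) x q
    else 0

/-- The operator `C f = Σ_{r ≥ 0} q_r B_r f`. -/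
def Cop (f : QFun) : QFun := fun x q => ∑' r : ℕ, q r * Bop (r : ℤ) f x q

/-- `f` is homogeneous of degree `h` in `(q_0, q_1, …)`. -/
def IsHomog (X : Set ℝ) (h : ℝ) (f : QFun) : Prop :=
  ∀ x ∈ X, ∀ q : ℕ → ℝ, 0 < q 0 → ∀ l : ℝ, 0 < l →
    f x (fun j => l * q j) = l ^ h * f x q

/-- `X` is a nonempty open (possibly infinite or semi-infinite) interval of `ℝ`. -/
def IsOpenInterval (X : Set ℝ) : Prop := IsOpen X ∧ X.OrdConnected ∧ X.Nonempty


open Function Filter Topology ContDiff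

namespace Stmt2


lemma one_le_inf : (1 : WithTop ℕ∞) ≤ ∞ := by exact_mod_cast (le_top : (1:ℕ∞) ≤ ⊤)

variable {m : ℕ} {U : Set (ℝ × (Fin (m+1) → ℝ))} {G H K : ℝ × (Fin (m+1) → ℝ) → ℝ}

/-- model partial derivative in direction `q_j` -/
def pdM (j : Fin (m+1)) (G : ℝ × (Fin (m+1) → ℝ) → ℝ) : ℝ × (Fin (m+1) → ℝ) → ℝ :=
  fun z => deriv (fun t => G (z.1, Function.update z.2 j t)) (z.2 j)

/-- model partial derivative in the `x` direction -/
def pdxM (G : ℝ × (Fin (m+1) → ℝ) → ℝ) : ℝ × (Fin (m+1) → ℝ) → ℝ :=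
  fun z => deriv (fun t => G (t, z.2)) z.1

lemma curve_eq (x : ℝ) (p : Fin (m+1) → ℝ) (j : Fin (m+1)) :
    (fun s : ℝ => ((x, Function.update p j s) : ℝ × (Fin (m+1) → ℝ)))
      = fun s : ℝ => ((x, p - p j • (Pi.single j 1 : Fin (m+1) → ℝ)) : ℝ × (Fin (m+1) → ℝ))
          + s • (((0:ℝ), Pi.single j (1:ℝ)) : ℝ × (Fin (m+1) → ℝ)) := by
  funext s
  rw [Prod.ext_iff]
  constructor
  · simp
  · funext i
    rcases eq_or_ne i j with h | h
    · subst h; simp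
    · simp [Function.update_of_ne h, Pi.single_apply, h]

lemma continuous_curve (x : ℝ) (p : Fin (m+1) → ℝ) (j : Fin (m+1)) :
    Continuous (fun s : ℝ => ((x, Function.update p j s) : ℝ × (Fin (m+1) → ℝ))) := by
  rw [curve_eq]
  fun_prop

lemma hasDerivAt_updateLine (G : ℝ × (Fin (m+1) → ℝ) → ℝ) (x : ℝ) (p : Fin (m+1) → ℝ)
    (j : Fin (m+1)) (t : ℝ) (h : DifferentiableAt ℝ G (x, Function.update p j t)) :
    HasDerivAt (fun s => G (x, Function.update p j s))
      (fderiv ℝ G (x, Function.update p j t) ((0 : ℝ), Pi.single j (1:ℝ))) t := by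
  have hline : HasDerivAt (fun s : ℝ => ((x, Function.update p j s) : ℝ × (Fin (m+1) → ℝ)))
      ((0:ℝ), Pi.single j (1:ℝ)) t := by
    rw [curve_eq]
    simpa using (((hasDerivAt_id t).smul_const ((0:ℝ), Pi.single j (1:ℝ)))).const_add
      ((x, p - p j • (Pi.single j 1 : Fin (m+1) → ℝ)) : ℝ × (Fin (m+1) → ℝ))
  exact h.hasFDerivAt.comp_hasDerivAt t hline

lemma hasDerivAt_fstLine (G : ℝ × (Fin (m+1) → ℝ) → ℝ) (p : Fin (m+1) → ℝ) (t : ℝ)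
    (h : DifferentiableAt ℝ G (t, p)) :
    HasDerivAt (fun s => G (s, p)) (fderiv ℝ G (t, p) ((1 : ℝ), 0)) t := by
  have hcurve : (fun s : ℝ => ((s, p) : ℝ × (Fin (m+1) → ℝ)))
      = fun s : ℝ => ((0, p) : ℝ × (Fin (m+1) → ℝ)) + s • ((1:ℝ), (0 : Fin (m+1) → ℝ)) := by
    funext s; rw [Prod.ext_iff]; constructor <;> simp
  have hline : HasDerivAt (fun s : ℝ => ((s, p) : ℝ × (Fin (m+1) → ℝ)))
      ((1:ℝ), (0 : Fin (m+1) → ℝ)) t := by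
    rw [hcurve]
    simpa using (((hasDerivAt_id t).smul_const ((1:ℝ), (0 : Fin (m+1) → ℝ)))).const_add
      ((0, p) : ℝ × (Fin (m+1) → ℝ))
  exact h.hasFDerivAt.comp_hasDerivAt t hline

lemma diffAt_of_smooth (hG : ContDiffOn ℝ ∞ G U) (hU : IsOpen U) {z} (hz : z ∈ U) :
    DifferentiableAt ℝ G z :=
  ((hG.contDiffAt (hU.mem_nhds hz)).differentiableAt (by simp))

lemma pdM_eq_on (hG : ContDiffOn ℝ ∞ G U) (hU : IsOpen U) {z} (hz : z ∈ U) (j : Fin (m+1)) :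
    pdM j G z = fderiv ℝ G z ((0:ℝ), Pi.single j (1:ℝ)) := by
  have h := hasDerivAt_updateLine G z.1 z.2 j (z.2 j)
    (by rw [Function.update_eq_self]; exact diffAt_of_smooth hG hU hz)
  rw [Function.update_eq_self] at h
  exact h.deriv

lemma pdxM_eq_on (hG : ContDiffOn ℝ ∞ G U) (hU : IsOpen U) {z} (hz : z ∈ U) :
    pdxM G z = fderiv ℝ G z ((1:ℝ), 0) := by
  have h := hasDerivAt_fstLine G z.2 z.1 (by exact diffAt_of_smooth hG hU hz)
  exact h.deriv

lemma fderivApply_contDiffOn (hG : ContDiffOn ℝ ∞ G U) (hU : IsOpen U)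
    (v : ℝ × (Fin (m+1) → ℝ)) :
    ContDiffOn ℝ ∞ (fun z => fderiv ℝ G z v) U :=
  (((contDiffOn_infty_iff_fderiv_of_isOpen hU).1 hG).2).clm_apply contDiffOn_const

lemma pdM_contDiffOn (hG : ContDiffOn ℝ ∞ G U) (hU : IsOpen U) (j : Fin (m+1)) :
    ContDiffOn ℝ ∞ (pdM j G) U :=
  (fderivApply_contDiffOn hG hU _).congr (fun z hz => pdM_eq_on hG hU hz j)

lemma pdxM_contDiffOn (hG : ContDiffOn ℝ ∞ G U) (hU : IsOpen U) :
    ContDiffOn ℝ ∞ (pdxM G) U :=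
  (fderivApply_contDiffOn hG hU _).congr (fun z hz => pdxM_eq_on hG hU hz)

lemma pdM_congr_nhds (hU : IsOpen U) {z} (hz : z ∈ U) (h : Set.EqOn H K U) (j : Fin (m+1)) :
    pdM j H z = pdM j K z := by
  apply Filter.EventuallyEq.deriv_eq
  have : ∀ᶠ s in 𝓝 (z.2 j), ((z.1, Function.update z.2 j s) : ℝ × (Fin (m+1) → ℝ)) ∈ U := by
    have hc := (continuous_curve z.1 z.2 j).continuousAt (x := z.2 j)
    have : ((z.1, Function.update z.2 j (z.2 j)) : ℝ × (Fin (m+1) → ℝ)) ∈ U := by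
      rw [Function.update_eq_self]; exact hz
    exact hc.eventually_mem (hU.mem_nhds this)
  filter_upwards [this] with s hs
  exact h hs

lemma pdxM_congr_nhds (hU : IsOpen U) {z} (hz : z ∈ U) (h : Set.EqOn H K U) :
    pdxM H z = pdxM K z := by
  apply Filter.EventuallyEq.deriv_eq
  have : ∀ᶠ s in 𝓝 z.1, ((s, z.2) : ℝ × (Fin (m+1) → ℝ)) ∈ U := by
    have hc : Continuous (fun s : ℝ => ((s, z.2) : ℝ × (Fin (m+1) → ℝ))) := by fun_prop
    exact (hc.continuousAt (x := z.1)).eventually_mem (hU.mem_nhds (by simpa using hz))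
  filter_upwards [this] with s hs
  exact h hs

lemma model_symm (hG : ContDiffOn ℝ ∞ G U) (hU : IsOpen U) {z} (hz : z ∈ U)
    (v w : ℝ × (Fin (m+1) → ℝ)) :
    fderiv ℝ (fun y => fderiv ℝ G y v) z w = fderiv ℝ (fun y => fderiv ℝ G y w) z v := by
  have hdiff : DifferentiableAt ℝ (fderiv ℝ G) z :=
    ((((contDiffOn_infty_iff_fderiv_of_isOpen hU).1 hG).2.contDiffAt
      (hU.mem_nhds hz)).differentiableAt (by simp))
  have key : ∀ u : ℝ × (Fin (m+1) → ℝ), ∀ w',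
      fderiv ℝ (fun y => fderiv ℝ G y u) z w' = fderiv ℝ (fderiv ℝ G) z w' u := by
    intro u w'
    have h2 : fderiv ℝ (fun y => fderiv ℝ G y u) z
        = (fderiv ℝ G z).comp (fderiv ℝ (fun _ => u) z) + (fderiv ℝ (fderiv ℝ G) z).flip u :=
      fderiv_clm_apply hdiff (differentiableAt_const u)
    rw [h2]
    simp
  rw [key v w, key w v]
  have hsymm : IsSymmSndFDerivAt ℝ G z := by
    apply (hG.contDiffAt (hU.mem_nhds hz)).isSymmSndFDerivAt
    simp only [minSmoothness_of_isRCLikeNormedField]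
    exact WithTop.coe_le_coe.mpr le_top
  exact hsymm w v

lemma pdM_pdM (hG : ContDiffOn ℝ ∞ G U) (hU : IsOpen U) {z} (hz : z ∈ U) (i j : Fin (m+1)) :
    pdM i (pdM j G) z = pdM j (pdM i G) z := by
  have step : ∀ a b : Fin (m+1), pdM a (pdM b G) z
      = fderiv ℝ (fun y => fderiv ℝ G y ((0:ℝ), Pi.single b 1)) z ((0:ℝ), Pi.single a 1) := by
    intro a b
    rw [pdM_congr_nhds hU hz (fun y hy => pdM_eq_on hG hU hy b) a]
    exact pdM_eq_on (fderivApply_contDiffOn hG hU _) hU hz a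
  rw [step i j, step j i, model_symm hG hU hz]

lemma pdxM_pdM (hG : ContDiffOn ℝ ∞ G U) (hU : IsOpen U) {z} (hz : z ∈ U) (j : Fin (m+1)) :
    pdM j (pdxM G) z = pdxM (pdM j G) z := by
  rw [pdM_congr_nhds hU hz (fun y hy => pdxM_eq_on hG hU hy) j,
      pdxM_congr_nhds hU hz (fun y hy => pdM_eq_on hG hU hy j),
      pdM_eq_on (fderivApply_contDiffOn hG hU _) hU hz j,
      pdxM_eq_on (fderivApply_contDiffOn hG hU _) hU hz,
      model_symm hG hU hz]



def trunc (n : ℕ) (q : ℕ → ℝ) : Fin (n+1) → ℝ := fun i => q i.val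

def Udom (X : Set ℝ) (n : ℕ) : Set (ℝ × (Fin (n+1) → ℝ)) := {p | p.1 ∈ X ∧ 0 < p.2 0}

def Rep (X : Set ℝ) (n : ℕ) (f : QFun) : Prop :=
  ∃ F : ℝ × (Fin (n+1) → ℝ) → ℝ, ContDiffOn ℝ (⊤ : ℕ∞) F (Udom X n) ∧
    ∀ x q, f x q = F (x, trunc n q)

variable {X : Set ℝ} {n : ℕ}

lemma isOpen_Udom (hX : IsOpen X) (n : ℕ) : IsOpen (Udom X n) := by
  have h1 : IsOpen {p : ℝ × (Fin (n+1) → ℝ) | p.1 ∈ X} :=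
    (hX.preimage continuous_fst)
  have h2 : IsOpen {p : ℝ × (Fin (n+1) → ℝ) | 0 < p.2 0} :=
    (isOpen_Ioi.preimage ((continuous_apply (0 : Fin (n+1))).comp continuous_snd))
  exact h1.inter h2

lemma mem_Udom {x : ℝ} {q : ℕ → ℝ} (hx : x ∈ X) (hq : 0 < q 0) :
    ((x, trunc n q) : ℝ × (Fin (n+1) → ℝ)) ∈ Udom X n := ⟨hx, hq⟩

lemma Rep.of_isQFunc {m : ℕ} {f : QFun} (hf : IsQFunc X m f) : Rep X m f := by
  obtain ⟨F, hF, heq⟩ := hf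
  exact ⟨F, hF.of_le (by simp), heq⟩

lemma trunc_update {j : ℕ} (hj : j ≤ n) (q : ℕ → ℝ) (t : ℝ) :
    trunc n (Function.update q j t) = Function.update (trunc n q) ⟨j, by omega⟩ t := by
  funext i
  rcases eq_or_ne (i : ℕ) j with h | h
  · have : i = (⟨j, by omega⟩ : Fin (n+1)) := Fin.ext h
    rw [this]
    simp only [Function.update_self]
    simp [trunc]
  · have hne : i ≠ (⟨j, by omega⟩ : Fin (n+1)) := by
      intro hc; exact h (by rw [hc])
    rw [Function.update_of_ne hne]
    simp [trunc, Function.update_of_ne h]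

lemma Rep.pd_zero {f : QFun} (hf : Rep X n f) {j : ℕ} (hj : n < j) :
    pd j f = fun _ _ => (0 : ℝ) := by
  obtain ⟨F, _, heq⟩ := hf
  funext x q
  have : (fun t => f x (Function.update q j t)) = fun _ => F (x, trunc n q) := by
    funext t
    rw [heq]
    have : trunc n (Function.update q j t) = trunc n q := by
      funext i
      exact Function.update_of_ne (by omega) _ _
    rw [this]
  simp only [pd, this, deriv_const]


/-! ### Link between `pd`/`pdx` and the model operators -/

variable {f g : QFun}

lemma pd_eq_pdM {F : ℝ × (Fin (n+1) → ℝ) → ℝ} (heq : ∀ x q, f x q = F (x, trunc n q))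
    {j : ℕ} (hj : j ≤ n) (x : ℝ) (q : ℕ → ℝ) :
    pd j f x q = pdM (⟨j, by omega⟩ : Fin (n+1)) F (x, trunc n q) := by
  have h : (fun t => f x (Function.update q j t))
      = fun t => F (x, Function.update (trunc n q) ⟨j, by omega⟩ t) := by
    funext t; rw [heq, trunc_update hj]
  unfold pd pdM
  rw [h]
  rfl

lemma pdx_eq_pdxM {F : ℝ × (Fin (n+1) → ℝ) → ℝ} (heq : ∀ x q, f x q = F (x, trunc n q))
    (x : ℝ) (q : ℕ → ℝ) :
    pdx f x q = pdxM F (x, trunc n q) := by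
  have h : (fun t => f t q) = fun t => F (t, trunc n q) := by
    funext t; rw [heq]
  unfold pdx pdxM
  rw [h]

lemma Rep.pd (hX : IsOpen X) (hf : Rep X n f) (j : ℕ) : Rep X n (_root_.pd j f) := by
  obtain ⟨F, hF, heq⟩ := hf
  by_cases hj : j ≤ n
  · exact ⟨pdM ⟨j, by omega⟩ F, pdM_contDiffOn hF (isOpen_Udom hX n) _,
      fun x q => pd_eq_pdM heq hj x q⟩
  · rw [Rep.pd_zero ⟨F, hF, heq⟩ (by omega)]
    exact ⟨fun _ => 0, contDiffOn_const, fun x q => rfl⟩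

lemma Rep.pdx (hX : IsOpen X) (hf : Rep X n f) : Rep X n (_root_.pdx f) := by
  obtain ⟨F, hF, heq⟩ := hf
  exact ⟨pdxM F, pdxM_contDiffOn hF (isOpen_Udom hX n), fun x q => pdx_eq_pdxM heq x q⟩

lemma pd_zero_fun (j : ℕ) (x : ℝ) (q : ℕ → ℝ) : pd j (fun _ _ => (0:ℝ)) x q = 0 := by
  simp [pd]

lemma pdx_zero_fun (x : ℝ) (q : ℕ → ℝ) : pdx (fun _ _ => (0:ℝ)) x q = 0 := by
  simp [pdx]

/-! ### Clairaut -/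

lemma Rep.pd_pd_comm (hX : IsOpen X) (hf : Rep X n f) {x : ℝ} {q : ℕ → ℝ}
    (hx : x ∈ X) (hq : 0 < q 0) (i j : ℕ) :
    _root_.pd i (_root_.pd j f) x q = _root_.pd j (_root_.pd i f) x q := by
  obtain ⟨F, hF, heq⟩ := hf
  by_cases hi : i ≤ n <;> by_cases hj : j ≤ n
  · rw [pd_eq_pdM (f := _root_.pd j f) (fun x q => pd_eq_pdM heq hj x q) hi,
        pd_eq_pdM (f := _root_.pd i f) (fun x q => pd_eq_pdM heq hi x q) hj,
        pdM_pdM hF (isOpen_Udom hX n) (mem_Udom hx hq)]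
  · rw [Rep.pd_zero ⟨F, hF, heq⟩ (show n < j by omega), pd_zero_fun,
        Rep.pd_zero (Rep.pd hX ⟨F, hF, heq⟩ i) (show n < j by omega)]
  · rw [Rep.pd_zero ⟨F, hF, heq⟩ (show n < i by omega), pd_zero_fun,
        Rep.pd_zero (Rep.pd hX ⟨F, hF, heq⟩ j) (show n < i by omega)]
  · rw [Rep.pd_zero ⟨F, hF, heq⟩ (show n < j by omega), pd_zero_fun,
        Rep.pd_zero ⟨F, hF, heq⟩ (show n < i by omega), pd_zero_fun]

lemma Rep.pdx_pd_comm (hX : IsOpen X) (hf : Rep X n f) {x : ℝ} {q : ℕ → ℝ}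
    (hx : x ∈ X) (hq : 0 < q 0) (j : ℕ) :
    _root_.pd j (_root_.pdx f) x q = _root_.pdx (_root_.pd j f) x q := by
  obtain ⟨F, hF, heq⟩ := hf
  by_cases hj : j ≤ n
  · rw [pd_eq_pdM (f := _root_.pdx f) (fun x q => pdx_eq_pdxM heq x q) hj,
        pdx_eq_pdxM (f := _root_.pd j f) (fun x q => pd_eq_pdM heq hj x q),
        pdxM_pdM hF (isOpen_Udom hX n) (mem_Udom hx hq)]
  · rw [Rep.pd_zero (Rep.pdx hX ⟨F, hF, heq⟩) (show n < j by omega),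
        Rep.pd_zero ⟨F, hF, heq⟩ (show n < j by omega), pdx_zero_fun]

/-! ### Differentiability along coordinate lines -/

lemma Rep.diff_line (hX : IsOpen X) (hf : Rep X n f) {x : ℝ} {q : ℕ → ℝ}
    (hx : x ∈ X) (hq : 0 < q 0) (j : ℕ) :
    DifferentiableAt ℝ (fun t => f x (Function.update q j t)) (q j) := by
  obtain ⟨F, hF, heq⟩ := hf
  by_cases hj : j ≤ n
  · have h : (fun t => f x (Function.update q j t))
        = fun t => F (x, Function.update (trunc n q) ⟨j, by omega⟩ t) := by
      funext t; rw [heq, trunc_update hj]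
    rw [h]
    have hupd : Function.update (trunc n q) (⟨j, by omega⟩ : Fin (n+1)) (q j) = trunc n q :=
      Function.update_eq_self _ _
    have hdiff : DifferentiableAt ℝ F
        (x, Function.update (trunc n q) (⟨j, by omega⟩ : Fin (n+1)) (q j)) := by
      rw [hupd]; exact diffAt_of_smooth hF (isOpen_Udom hX n) (mem_Udom hx hq)
    exact (hasDerivAt_updateLine F x (trunc n q) ⟨j, by omega⟩ (q j) hdiff).differentiableAt
  · have h : (fun t => f x (Function.update q j t)) = fun _ => F (x, trunc n q) := by
      funext t
      rw [heq]
      have : trunc n (Function.update q j t) = trunc n q := by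
        funext i; exact Function.update_of_ne (by omega) _ _
      rw [this]
    rw [h]
    exact differentiableAt_const _

lemma Rep.diff_x (hX : IsOpen X) (hf : Rep X n f) {x : ℝ} {q : ℕ → ℝ}
    (hx : x ∈ X) (hq : 0 < q 0) :
    DifferentiableAt ℝ (fun t => f t q) x := by
  obtain ⟨F, hF, heq⟩ := hf
  have h : (fun t => f t q) = fun t => F (t, trunc n q) := by funext t; rw [heq]
  rw [h]
  exact (hasDerivAt_fstLine F (trunc n q) x
    (diffAt_of_smooth hF (isOpen_Udom hX n) (mem_Udom hx hq))).differentiableAt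

lemma Rep.hasDerivAt_line (hX : IsOpen X) (hf : Rep X n f) {x : ℝ} {q : ℕ → ℝ}
    (hx : x ∈ X) (hq : 0 < q 0) (j : ℕ) :
    HasDerivAt (fun t => f x (Function.update q j t)) (_root_.pd j f x q) (q j) :=
  (hf.diff_line hX hx hq j).hasDerivAt

lemma Rep.hasDerivAt_x (hX : IsOpen X) (hf : Rep X n f) {x : ℝ} {q : ℕ → ℝ}
    (hx : x ∈ X) (hq : 0 < q 0) :
    HasDerivAt (fun t => f t q) (_root_.pdx f x q) x :=
  (hf.diff_x hX hx hq).hasDerivAt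

/-! ### Pointwise derivative arithmetic -/

lemma pd_constMul (c : ℝ) (f : QFun) (j : ℕ) (x : ℝ) (q : ℕ → ℝ) :
    pd j (fun x q => c * f x q) x q = c * pd j f x q := by
  simp only [pd]
  exact deriv_const_mul_field c

lemma pdx_constMul (c : ℝ) (f : QFun) (x : ℝ) (q : ℕ → ℝ) :
    pdx (fun x q => c * f x q) x q = c * pdx f x q := by
  simp only [pdx]
  exact deriv_const_mul_field c

lemma pd_add {n n' : ℕ} (hX : IsOpen X) (hf : Rep X n f) (hg : Rep X n' g)
    {x : ℝ} {q : ℕ → ℝ} (hx : x ∈ X) (hq : 0 < q 0) (j : ℕ) :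
    pd j (fun x q => f x q + g x q) x q = pd j f x q + pd j g x q :=
  ((hf.hasDerivAt_line hX hx hq j).add (hg.hasDerivAt_line hX hx hq j)).deriv

lemma pdx_add {n n' : ℕ} (hX : IsOpen X) (hf : Rep X n f) (hg : Rep X n' g)
    {x : ℝ} {q : ℕ → ℝ} (hx : x ∈ X) (hq : 0 < q 0) :
    pdx (fun x q => f x q + g x q) x q = pdx f x q + pdx g x q :=
  ((hf.hasDerivAt_x hX hx hq).add (hg.hasDerivAt_x hX hx hq)).deriv

lemma pd_finsum (hX : IsOpen X) {s : Finset ℕ} {g : ℕ → QFun} {N : ℕ → ℕ}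
    (hg : ∀ k ∈ s, Rep X (N k) (g k)) {x : ℝ} {q : ℕ → ℝ} (hx : x ∈ X) (hq : 0 < q 0) (j : ℕ) :
    pd j (fun x q => ∑ k ∈ s, g k x q) x q = ∑ k ∈ s, pd j (g k) x q :=
  (HasDerivAt.fun_sum (fun k hk => ((hg k hk).hasDerivAt_line hX hx hq j))).deriv

lemma pdx_finsum (hX : IsOpen X) {s : Finset ℕ} {g : ℕ → QFun} {N : ℕ → ℕ}
    (hg : ∀ k ∈ s, Rep X (N k) (g k)) {x : ℝ} {q : ℕ → ℝ} (hx : x ∈ X) (hq : 0 < q 0) :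
    pdx (fun x q => ∑ k ∈ s, g k x q) x q = ∑ k ∈ s, pdx (g k) x q :=
  (HasDerivAt.fun_sum (fun k hk => ((hg k hk).hasDerivAt_x hX hx hq))).deriv

lemma pd_coordMul (hX : IsOpen X) (hf : Rep X n f) {x : ℝ} {q : ℕ → ℝ}
    (hx : x ∈ X) (hq : 0 < q 0) (i j : ℕ) :
    pd j (fun x q => q i * f x q) x q = (if i = j then f x q else 0) + q i * pd j f x q := by
  rcases eq_or_ne i j with rfl | hij
  · simp only [if_pos rfl, pd]
    have h : (fun t => Function.update q i t i * f x (Function.update q i t))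
        = fun t => t * f x (Function.update q i t) := by
      funext t; rw [Function.update_self]
    rw [h]
    have hd := (hasDerivAt_id (q i)).fun_mul (hf.hasDerivAt_line hX hx hq i)
    rw [Function.update_eq_self] at hd
    simpa [pd] using hd.deriv
  · simp only [if_neg hij, zero_add, pd]
    have h : (fun t => Function.update q j t i * f x (Function.update q j t))
        = fun t => q i * f x (Function.update q j t) := by
      funext t; rw [Function.update_of_ne hij]
    rw [h]
    exact deriv_const_mul_field (q i)

lemma pdx_coordMul (f : QFun) (i : ℕ) (x : ℝ) (q : ℕ → ℝ) :
    pdx (fun x q => q i * f x q) x q = q i * pdx f x q := by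
  simp only [pdx]
  exact deriv_const_mul_field (q i)

/-! ### Collapse of the infinite sums -/

lemma tsum_collapse {g : ℕ → ℝ} (N : ℕ) (h : ∀ k, N ≤ k → g k = 0) :
    ∑' k, g k = ∑ k ∈ Finset.range N, g k :=
  tsum_eq_sum (fun k hk => h k (by simpa using hk))

lemma Dop_eq (hf : Rep X n f) :
    Dop f = fun x q => pdx f x q + ∑ j ∈ Finset.range (n+1), q (j+1) * pd j f x q := by
  funext x q
  show pdx f x q + _ = _
  congr 1
  apply tsum_collapse (n+1)
  intro k hk
  rw [hf.pd_zero (show n < k by omega)]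
  simp

lemma Eop_eq (hf : Rep X n f) :
    Eop f = fun x q => ∑ j ∈ Finset.range (n+1), q j * pd j f x q := by
  funext x q
  apply tsum_collapse (n+1)
  intro k hk
  rw [hf.pd_zero (show n < k by omega)]
  simp

lemma Dop_zero : Dop (fun _ _ => (0:ℝ)) = fun _ _ => (0:ℝ) := by
  funext x q
  show pdx _ x q + _ = _
  rw [pdx_zero_fun]
  have : ∀ j : ℕ, q (j+1) * pd j (fun _ _ => (0:ℝ)) x q = 0 := by
    intro j; rw [pd_zero_fun]; ring
  simp only [this, tsum_zero, add_zero]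

lemma DopIter_zero (k : ℕ) : Dop^[k] (fun _ _ => (0:ℝ)) = fun _ _ => (0:ℝ) := by
  induction k with
  | zero => rfl
  | succ k ih => rw [Function.iterate_succ_apply, Dop_zero, ih]

/-! ### Closure properties of `Rep` -/

lemma Rep.zero : Rep X n (fun _ _ => (0:ℝ)) :=
  ⟨fun _ => 0, contDiffOn_const, fun _ _ => rfl⟩

lemma Rep.add (hf : Rep X n f) (hg : Rep X n g) : Rep X n (fun x q => f x q + g x q) := by
  obtain ⟨F, hF, heF⟩ := hf
  obtain ⟨G, hG, heG⟩ := hg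
  exact ⟨fun p => F p + G p, hF.add hG, fun x q => by simp only []; rw [heF, heG]⟩

lemma Rep.constMul (hf : Rep X n f) (c : ℝ) : Rep X n (fun x q => c * f x q) := by
  obtain ⟨F, hF, heF⟩ := hf
  exact ⟨fun p => c * F p, contDiffOn_const.mul hF, fun x q => by simp only []; rw [heF]⟩

lemma Rep.coordMul (hf : Rep X n f) {j : ℕ} (hj : j ≤ n) :
    Rep X n (fun x q => q j * f x q) := by
  obtain ⟨F, hF, heF⟩ := hf
  refine ⟨fun p => p.2 ⟨j, by omega⟩ * F p, ?_, fun x q => by simp only []; rw [heF]; rfl⟩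
  exact (((contDiff_apply ℝ ℝ (⟨j, by omega⟩ : Fin (n+1))).comp
    contDiff_snd).contDiffOn).mul hF

lemma Rep.finsum {s : Finset ℕ} {g : ℕ → QFun} (h : ∀ k ∈ s, Rep X n (g k)) :
    Rep X n (fun x q => ∑ k ∈ s, g k x q) := by
  classical
  induction s using Finset.induction_on with
  | empty => simpa using Rep.zero
  | insert a s ha ih =>
    have : (fun x q => ∑ k ∈ insert a s, g k x q)
        = fun x q => g a x q + ∑ k ∈ s, g k x q := by
      funext x q; rw [Finset.sum_insert ha]
    rw [this]
    exact (h a (Finset.mem_insert_self a s)).add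
      (ih (fun k hk => h k (Finset.mem_insert_of_mem hk)))

lemma Rep.mono {n' : ℕ} (hf : Rep X n f) (hle : n ≤ n') : Rep X n' f := by
  obtain ⟨F, hF, heF⟩ := hf
  have hle' : n + 1 ≤ n' + 1 := by omega
  refine ⟨fun p => F (p.1, fun i => p.2 (Fin.castLE hle' i)), ?_, ?_⟩
  · have hφ : ContDiff ℝ ∞ (fun p : ℝ × (Fin (n'+1) → ℝ) =>
        ((p.1, fun i => p.2 (Fin.castLE hle' i)) : ℝ × (Fin (n+1) → ℝ))) :=
      contDiff_fst.prodMk (contDiff_pi.2 fun i =>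
        (contDiff_apply ℝ ℝ (Fin.castLE hle' i)).comp contDiff_snd)
    apply hF.comp hφ.contDiffOn
    intro p hp
    refine ⟨hp.1, ?_⟩
    have h0 : Fin.castLE hle' (0 : Fin (n+1)) = (0 : Fin (n'+1)) := by
      ext; simp
    show 0 < p.2 (Fin.castLE hle' 0)
    rw [h0]
    exact hp.2
  · intro x q
    rw [heF]
    rfl

lemma Rep.Dop (hX : IsOpen X) (hf : Rep X n f) : Rep X (n+1) (_root_.Dop f) := by
  rw [Dop_eq hf]
  exact ((hf.pdx hX).mono (by omega)).add
    (Rep.finsum (fun k hk => ((hf.pd hX k).mono (by omega)).coordMul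
      (by simp only [Finset.mem_range] at hk; omega)))

lemma Rep.Eop (hX : IsOpen X) (hf : Rep X n f) : Rep X n (_root_.Eop f) := by
  rw [Eop_eq hf]
  exact Rep.finsum (fun k hk => (hf.pd hX k).coordMul
    (by simp only [Finset.mem_range] at hk; omega))

lemma Rep.DopIter (hX : IsOpen X) (k : ℕ) (hf : Rep X n f) :
    Rep X (n+k) (_root_.Dop^[k] f) := by
  induction k generalizing n f with
  | zero => exact hf
  | succ k ih =>
    rw [Function.iterate_succ_apply]
    have := ih (hf.Dop hX)
    rwa [show n+1+k = n+(k+1) by omega] at this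

/-! ### Equality on the domain, and locality of the operators -/

def DEq (X : Set ℝ) (g h : QFun) : Prop := ∀ x ∈ X, ∀ q : ℕ → ℝ, 0 < q 0 → g x q = h x q

lemma DEq.refl {g : QFun} : DEq X g g := fun x _ q _ => Eq.refl (g x q)

lemma DEq.trans {g h k : QFun} (h1 : DEq X g h) (h2 : DEq X h k) : DEq X g k :=
  fun x hx q hq => (h1 x hx q hq).trans (h2 x hx q hq)

lemma DEq.pd (hX : IsOpen X) {g h : QFun} (hgh : DEq X g h) {x : ℝ} {q : ℕ → ℝ}
    (hx : x ∈ X) (hq : 0 < q 0) (j : ℕ) :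
    _root_.pd j g x q = _root_.pd j h x q := by
  apply Filter.EventuallyEq.deriv_eq
  rcases eq_or_ne j 0 with rfl | hj
  · have hev : ∀ᶠ t in 𝓝 (q 0), 0 < t := eventually_gt_nhds hq
    filter_upwards [hev] with t ht
    apply hgh x hx
    rw [Function.update_self]
    exact ht
  · apply Filter.Eventually.of_forall
    intro t
    apply hgh x hx
    rw [Function.update_of_ne (Ne.symm hj)]
    exact hq

lemma DEq.pdx (hX : IsOpen X) {g h : QFun} (hgh : DEq X g h) {x : ℝ} {q : ℕ → ℝ}
    (hx : x ∈ X) (hq : 0 < q 0) :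
    _root_.pdx g x q = _root_.pdx h x q := by
  apply Filter.EventuallyEq.deriv_eq
  filter_upwards [hX.mem_nhds hx] with t ht
  exact hgh t ht q hq

lemma DEq.Dop (hX : IsOpen X) {g h : QFun} (hgh : DEq X g h) :
    DEq X (_root_.Dop g) (_root_.Dop h) := by
  intro x hx q hq
  show _root_.pdx g x q + _ = _root_.pdx h x q + _
  rw [hgh.pdx hX hx hq]
  congr 1
  exact tsum_congr fun j => by rw [hgh.pd hX hx hq j]

lemma DEq.DopIter (hX : IsOpen X) (k : ℕ) {g h : QFun} (hgh : DEq X g h) :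
    DEq X (_root_.Dop^[k] g) (_root_.Dop^[k] h) := by
  induction k generalizing g h with
  | zero => exact hgh
  | succ k ih =>
    rw [Function.iterate_succ_apply, Function.iterate_succ_apply]
    exact ih (hgh.Dop hX)

/-! ### Linearity of the operators on the domain -/

lemma Eop_constMul (c : ℝ) (g : QFun) (x : ℝ) (q : ℕ → ℝ) :
    Eop (fun x q => c * g x q) x q = c * Eop g x q := by
  rw [show Eop (fun x q => c * g x q) x q
      = ∑' j, q j * pd j (fun x q => c * g x q) x q from rfl]
  rw [show (fun j => q j * pd j (fun x q => c * g x q) x q)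
      = fun j => c * (q j * pd j g x q) from funext fun j => by
        rw [pd_constMul]; ring]
  rw [tsum_mul_left]
  rfl

lemma Eop_add {n n' : ℕ} (hX : IsOpen X) (hf : Rep X n f) (hg : Rep X n' g) :
    DEq X (Eop (fun x q => f x q + g x q)) (fun x q => Eop f x q + Eop g x q) := by
  intro x hx q hq
  set N := max n n' with hN
  have hf' : Rep X N f := hf.mono (le_max_left _ _)
  have hg' : Rep X N g := hg.mono (le_max_right _ _)
  rw [Eop_eq (hf'.add hg'), Eop_eq hf', Eop_eq hg']
  simp only
  rw [← Finset.sum_add_distrib]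
  apply Finset.sum_congr rfl
  intro j hj
  rw [pd_add hX hf' hg' hx hq j]
  ring

lemma Eop_finsum (hX : IsOpen X) {s : Finset ℕ} {g : ℕ → QFun} {N : ℕ → ℕ}
    (h : ∀ k ∈ s, Rep X (N k) (g k)) :
    DEq X (Eop (fun x q => ∑ k ∈ s, g k x q)) (fun x q => ∑ k ∈ s, Eop (g k) x q) := by
  intro x hx q hq
  set M := s.sup N with hM
  have h' : ∀ k ∈ s, Rep X M (g k) := fun k hk => (h k hk).mono (Finset.le_sup hk)
  rw [Eop_eq (Rep.finsum h')]
  simp only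
  have hterm : ∀ j ∈ Finset.range (M+1),
      q j * pd j (fun x q => ∑ k ∈ s, g k x q) x q
        = ∑ k ∈ s, q j * pd j (g k) x q := by
    intro j hj
    rw [pd_finsum hX h' hx hq j, Finset.mul_sum]
  rw [Finset.sum_congr rfl hterm, Finset.sum_comm]
  apply Finset.sum_congr rfl
  intro k hk
  rw [Eop_eq (h' k hk)]

lemma Dop_add {n n' : ℕ} (hX : IsOpen X) (hf : Rep X n f) (hg : Rep X n' g) :
    DEq X (Dop (fun x q => f x q + g x q)) (fun x q => Dop f x q + Dop g x q) := by
  intro x hx q hq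
  set N := max n n' with hN
  have hf' : Rep X N f := hf.mono (le_max_left _ _)
  have hg' : Rep X N g := hg.mono (le_max_right _ _)
  rw [Dop_eq (hf'.add hg'), Dop_eq hf', Dop_eq hg']
  simp only
  rw [pdx_add hX hf' hg' hx hq]
  have : ∀ j ∈ Finset.range (N+1),
      q (j+1) * pd j (fun x q => f x q + g x q) x q
        = q (j+1) * pd j f x q + q (j+1) * pd j g x q := by
    intro j hj
    rw [pd_add hX hf' hg' hx hq j]; ring
  rw [Finset.sum_congr rfl this, Finset.sum_add_distrib]
  ring

lemma DopIter_add {n n' : ℕ} (hX : IsOpen X) (k : ℕ) (hf : Rep X n f) (hg : Rep X n' g) :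
    DEq X (Dop^[k] (fun x q => f x q + g x q))
      (fun x q => Dop^[k] f x q + Dop^[k] g x q) := by
  induction k generalizing f g n n' with
  | zero => exact DEq.refl
  | succ k ih =>
    rw [Function.iterate_succ_apply, Function.iterate_succ_apply, Function.iterate_succ_apply]
    exact ((DEq.DopIter hX k (Dop_add hX hf hg)).trans (ih (hf.Dop hX) (hg.Dop hX)))

lemma Dop_constMul (c : ℝ) (g : QFun) : Dop (fun x q => c * g x q) = fun x q => c * Dop g x q := by
  funext x q
  show pdx (fun x q => c * g x q) x q + _ = _
  rw [pdx_constMul]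
  rw [show (fun j => q (j+1) * pd j (fun x q => c * g x q) x q)
      = fun j => c * (q (j+1) * pd j g x q) from funext fun j => by
        rw [pd_constMul]; ring]
  rw [tsum_mul_left]
  show c * _ + c * _ = c * (_ + _)
  ring

lemma DopIter_constMul (c : ℝ) (g : QFun) (k : ℕ) :
    Dop^[k] (fun x q => c * g x q) = fun x q => c * Dop^[k] g x q := by
  induction k generalizing g with
  | zero => rfl
  | succ k ih =>
    rw [Function.iterate_succ_apply, Function.iterate_succ_apply, Dop_constMul, ih]

lemma algebra_key (n : ℕ) (qq A P : ℕ → ℝ) (M : ℕ → ℕ → ℝ)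
    (hA : A (n+1) = 0) (hM1 : ∀ i, M (n+1) i = 0) (hsym : ∀ i j, M j i = M i j) :
    ∑ j ∈ Finset.range (n+2), qq j *
        (A j + ∑ i ∈ Finset.range (n+1), ((if i+1 = j then P i else 0) + qq (i+1) * M j i))
      = ∑ i ∈ Finset.range (n+1), qq i * A i
        + ∑ j ∈ Finset.range (n+1), qq (j+1) *
            ∑ i ∈ Finset.range (n+1), ((if i = j then P i else 0) + qq i * M j i) := by
  -- expand everything
  have expand : ∀ j, qq j * (A j + ∑ i ∈ Finset.range (n+1),
        ((if i+1 = j then P i else 0) + qq (i+1) * M j i))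
      = qq j * A j + (∑ i ∈ Finset.range (n+1), (if i+1 = j then qq j * P i else 0))
        + ∑ i ∈ Finset.range (n+1), qq j * (qq (i+1) * M j i) := by
    intro j
    rw [Finset.sum_add_distrib, mul_add, mul_add, Finset.mul_sum, Finset.mul_sum]
    simp only [mul_ite, mul_zero]
    ring
  rw [Finset.sum_congr rfl (fun j _ => expand j), Finset.sum_add_distrib,
    Finset.sum_add_distrib]
  -- term 1
  have t1 : ∑ j ∈ Finset.range (n+2), qq j * A j = ∑ j ∈ Finset.range (n+1), qq j * A j := by
    rw [Finset.sum_range_succ, hA, mul_zero, add_zero]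
  -- term 2
  have t2 : ∑ j ∈ Finset.range (n+2), ∑ i ∈ Finset.range (n+1),
      (if i+1 = j then qq j * P i else 0) = ∑ i ∈ Finset.range (n+1), qq (i+1) * P i := by
    rw [Finset.sum_comm]
    apply Finset.sum_congr rfl
    intro i hi
    rw [Finset.sum_ite_eq (Finset.range (n+2)) (i+1) (fun j => qq j * P i)]
    rw [if_pos (by simp at hi ⊢; omega)]
  -- term 3
  have t3 : ∑ j ∈ Finset.range (n+2), ∑ i ∈ Finset.range (n+1), qq j * (qq (i+1) * M j i)
      = ∑ j ∈ Finset.range (n+1), ∑ i ∈ Finset.range (n+1), qq j * (qq (i+1) * M j i) := by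
    rw [Finset.sum_range_succ]
    simp [hM1]
  rw [t1, t2, t3]
  -- now the RHS
  have rexp : ∀ j ∈ Finset.range (n+1), qq (j+1) *
      ∑ i ∈ Finset.range (n+1), ((if i = j then P i else 0) + qq i * M j i)
      = qq (j+1) * P j + ∑ i ∈ Finset.range (n+1), qq (j+1) * (qq i * M j i) := by
    intro j hj
    rw [Finset.sum_add_distrib, mul_add, Finset.mul_sum, Finset.mul_sum]
    congr 1
    simp only [mul_ite, mul_zero]
    rw [Finset.sum_ite_eq' (Finset.range (n+1)) j (fun i => qq (j+1) * P i), if_pos hj]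
  rw [Finset.sum_congr rfl rexp, Finset.sum_add_distrib]
  have t3' : ∑ j ∈ Finset.range (n+1), ∑ i ∈ Finset.range (n+1), qq j * (qq (i+1) * M j i)
      = ∑ j ∈ Finset.range (n+1), ∑ i ∈ Finset.range (n+1), qq (j+1) * (qq i * M j i) := by
    rw [Finset.sum_comm]
    apply Finset.sum_congr rfl; intro i _
    apply Finset.sum_congr rfl; intro j _
    rw [hsym j i]; ring
  rw [t3']
  ring


lemma ED_comm (hX : IsOpen X) (hf : Rep X n f) : DEq X (Eop (Dop f)) (Dop (Eop f)) := by
  intro x hx q hq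
  have hpdf : ∀ i : ℕ, Rep X n (_root_.pd i f) := fun i => hf.pd hX i
  have hpdxf : Rep X n (_root_.pdx f) := hf.pdx hX
  have hsummand : ∀ i ∈ Finset.range (n+1),
      Rep X (n+1) (fun x q => q (i+1) * _root_.pd i f x q) := by
    intro i hi
    exact ((hpdf i).mono (by omega)).coordMul (by simp only [Finset.mem_range] at hi; omega)
  have hsum2 : Rep X (n+1) (fun x q => ∑ i ∈ Finset.range (n+1), q (i+1) * _root_.pd i f x q) :=
    Rep.finsum hsummand
  have hL : Eop (Dop f) x q
      = ∑ j ∈ Finset.range (n+2), q j *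
          (pdx (pd j f) x q + ∑ i ∈ Finset.range (n+1),
            ((if i+1 = j then pd i f x q else 0) + q (i+1) * pd j (pd i f) x q)) := by
    rw [Eop_eq (hf.Dop hX)]
    simp only
    apply Finset.sum_congr rfl
    intro j hj
    congr 1
    rw [Dop_eq hf]
    rw [pd_add hX hpdxf hsum2 hx hq j]
    rw [hf.pdx_pd_comm hX hx hq j]
    congr 1
    rw [pd_finsum hX hsummand hx hq j]
    apply Finset.sum_congr rfl
    intro i hi
    exact pd_coordMul hX (hpdf i) hx hq (i+1) j
  have hR : Dop (Eop f) x q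
      = ∑ i ∈ Finset.range (n+1), q i * pdx (pd i f) x q
        + ∑ j ∈ Finset.range (n+1), q (j+1) *
            ∑ i ∈ Finset.range (n+1), ((if i = j then pd i f x q else 0)
              + q i * pd j (pd i f) x q) := by
    rw [Dop_eq (hf.Eop hX)]
    simp only
    congr 1
    · rw [Eop_eq hf]
      rw [pdx_finsum hX (fun i hi => (hpdf i).coordMul
        (by simp only [Finset.mem_range] at hi; omega)) hx hq]
      exact Finset.sum_congr rfl fun i _ => by rw [pdx_coordMul]
    · apply Finset.sum_congr rfl
      intro j hj
      congr 1
      rw [Eop_eq hf]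
      rw [pd_finsum hX (fun i hi => (hpdf i).coordMul
        (by simp only [Finset.mem_range] at hi; omega)) hx hq j]
      exact Finset.sum_congr rfl fun i hi => pd_coordMul hX (hpdf i) hx hq i j
  rw [hL, hR]
  have hA : pdx (pd (n+1) f) x q = 0 := by
    rw [hf.pd_zero (show n < n+1 by omega)]; exact pdx_zero_fun x q
  have hM1 : ∀ i, pd (n+1) (pd i f) x q = 0 := by
    intro i
    rw [(hpdf i).pd_zero (show n < n+1 by omega)]
  have hsym : ∀ i j, pd j (pd i f) x q = pd i (pd j f) x q :=
    fun i j => hf.pd_pd_comm hX hx hq j i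
  exact algebra_key n q (fun j => pdx (pd j f) x q) (fun i => pd i f x q)
    (fun j i => pd j (pd i f) x q) hA hM1 hsym

/-! ### Iterated commutation and the remaining operators -/

lemma EDiter_comm (hX : IsOpen X) (k : ℕ) {n : ℕ} {f : QFun} (hf : Rep X n f) :
    DEq X (Eop (Dop^[k] f)) (Dop^[k] (Eop f)) := by
  induction k generalizing n f with
  | zero => exact DEq.refl
  | succ k ih =>
    rw [Function.iterate_succ_apply, Function.iterate_succ_apply]
    exact (ih (hf.Dop hX)).trans (DEq.DopIter hX k (ED_comm hX hf))

lemma pd_Eop (hX : IsOpen X) (hf : Rep X n f) {x : ℝ} {q : ℕ → ℝ}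
    (hx : x ∈ X) (hq : 0 < q 0) {k : ℕ} (hk : k ≤ n) :
    pd k (Eop f) x q = pd k f x q + Eop (pd k f) x q := by
  have hpdf : ∀ i : ℕ, Rep X n (_root_.pd i f) := fun i => hf.pd hX i
  rw [Eop_eq hf, pd_finsum hX (fun i hi => (hpdf i).coordMul
    (by simp only [Finset.mem_range] at hi; omega)) hx hq k]
  have hterm : ∀ i ∈ Finset.range (n+1), pd k (fun x q => q i * pd i f x q) x q
      = (if i = k then pd i f x q else 0) + q i * pd i (pd k f) x q := by
    intro i hi
    rw [pd_coordMul hX (hpdf i) hx hq i k, hf.pd_pd_comm hX hx hq k i]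
  rw [Finset.sum_congr rfl hterm, Finset.sum_add_distrib,
      Finset.sum_ite_eq' (Finset.range (n+1)) k (fun i => pd i f x q),
      if_pos (Finset.mem_range.mpr (by omega)), Eop_eq (hpdf k)]

lemma Eop_coordMul0 (hX : IsOpen X) {g : QFun} (hg : Rep X n g) :
    DEq X (Eop (fun x q => q 0 * g x q)) (fun x q => q 0 * g x q + q 0 * Eop g x q) := by
  intro x hx q hq
  rw [Eop_eq (hg.coordMul (Nat.zero_le n))]
  simp only
  have hterm : ∀ j ∈ Finset.range (n+1), q j * pd j (fun x q => q 0 * g x q) x q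
      = (if 0 = j then q j * g x q else 0) + q 0 * (q j * pd j g x q) := by
    intro j hj
    rw [pd_coordMul hX hg hx hq 0 j]
    split <;> ring
  rw [Finset.sum_congr rfl hterm, Finset.sum_add_distrib,
      Finset.sum_ite_eq (Finset.range (n+1)) 0 (fun j => q j * g x q),
      if_pos (Finset.mem_range.mpr (by omega)), ← Finset.mul_sum, Eop_eq hg]

lemma Lop_eq (hf : Rep X n f) :
    Lop f = fun x q => ∑ k ∈ Finset.range (n+1),
      (-1:ℝ)^(k+1) * Dop^[k] (fun y p => p 0 * pd k f y p) x q := by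
  funext x q
  apply tsum_collapse (n+1)
  intro k hk
  have h0 : (fun y p => p 0 * pd k f y p) = (fun _ _ => (0:ℝ)) := by
    rw [hf.pd_zero (show n < k by omega)]
    funext y p
    simp
  rw [h0, DopIter_zero]
  simp

lemma Lam_eq (hf : Rep X n f) :
    Lam f = fun x q => ∑ k ∈ Finset.range (n+1), (-1:ℝ)^k * Dop^[k] (pd k f) x q := by
  funext x q
  apply tsum_collapse (n+1)
  intro k hk
  rw [hf.pd_zero (show n < k by omega), DopIter_zero]
  simp

lemma key2 (hX : IsOpen X) (hf : Rep X n f) {k : ℕ} (hk : k ≤ n) :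
    DEq X (Eop (fun x q => q 0 * pd k f x q)) (fun x q => q 0 * pd k (Eop f) x q) := by
  intro x hx q hq
  rw [Eop_coordMul0 hX (hf.pd hX k) x hx q hq]
  simp only
  rw [pd_Eop hX hf hx hq hk]
  ring

lemma EL_comm (hX : IsOpen X) (hf : Rep X n f) : DEq X (Eop (Lop f)) (Lop (Eop f)) := by
  intro x hx q hq
  have hgk : ∀ k : ℕ, Rep X n (fun y p => p 0 * _root_.pd k f y p) :=
    fun k => (hf.pd hX k).coordMul (Nat.zero_le n)
  have hterm : ∀ k ∈ Finset.range (n+1), Rep X (n + k)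
      (fun x q => (-1:ℝ)^(k+1) * Dop^[k] (fun y p => p 0 * _root_.pd k f y p) x q) :=
    fun k _ => (Rep.DopIter hX k (hgk k)).constMul _
  rw [Lop_eq hf, Eop_finsum hX hterm x hx q hq, Lop_eq (hf.Eop hX)]
  simp only
  apply Finset.sum_congr rfl
  intro k hk
  rw [Eop_constMul]
  congr 1
  rw [EDiter_comm hX k (hgk k) x hx q hq]
  exact DEq.DopIter hX k (key2 hX hf
    (by simp only [Finset.mem_range] at hk; omega)) x hx q hq

lemma LamE (hX : IsOpen X) (hf : Rep X n f) :
    DEq X (Lam (Eop f)) (fun x q => Eop (Lam f) x q + Lam f x q) := by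
  intro x hx q hq
  have hpdf : ∀ k : ℕ, Rep X n (_root_.pd k f) := fun k => hf.pd hX k
  have hterm : ∀ k ∈ Finset.range (n+1),
      Rep X (n + k) (fun x q => (-1:ℝ)^k * Dop^[k] (_root_.pd k f) x q) :=
    fun k _ => (Rep.DopIter hX k (hpdf k)).constMul _
  simp only
  rw [Lam_eq (hf.Eop hX), Lam_eq hf, Eop_finsum hX hterm x hx q hq]
  simp only
  have hterm2 : ∀ k ∈ Finset.range (n+1), (-1:ℝ)^k * Dop^[k] (pd k (Eop f)) x q
      = (-1:ℝ)^k * (Dop^[k] (pd k f) x q + Eop (Dop^[k] (pd k f)) x q) := by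
    intro k hk
    have hk' : k ≤ n := by simp only [Finset.mem_range] at hk; omega
    congr 1
    have e1 : Dop^[k] (pd k (Eop f)) x q
        = Dop^[k] (fun x q => pd k f x q + Eop (pd k f) x q) x q :=
      DEq.DopIter hX k (fun x hx q hq => pd_Eop hX hf hx hq hk') x hx q hq
    rw [e1, DopIter_add hX k (hpdf k) ((hpdf k).Eop hX) x hx q hq]
    simp only
    rw [← EDiter_comm hX k (hpdf k) x hx q hq]
  have hterm3 : ∀ k ∈ Finset.range (n+1),
      Eop (fun x q => (-1:ℝ)^k * Dop^[k] (_root_.pd k f) x q) x q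
      = (-1:ℝ)^k * Eop (Dop^[k] (_root_.pd k f)) x q :=
    fun k _ => Eop_constMul _ _ x q
  rw [Finset.sum_congr rfl hterm2, Finset.sum_congr rfl hterm3]
  simp only [mul_add, Finset.sum_add_distrib]
  ring

end Stmt2

/-- The Euler operator `E` commutes with `D` and with `L`,
while `Λ E = E Λ + Λ`. -/
theorem stmt2 (X : Set ℝ) (hX : IsOpenInterval X) (m : ℕ) (f : QFun)
    (hf : IsQFunc X m f) :
    (∀ x ∈ X, ∀ q : ℕ → ℝ, 0 < q 0 → Eop (Dop f) x q = Dop (Eop f) x q) ∧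
    (∀ x ∈ X, ∀ q : ℕ → ℝ, 0 < q 0 → Eop (Lop f) x q = Lop (Eop f) x q) ∧
    (∀ x ∈ X, ∀ q : ℕ → ℝ, 0 < q 0 →
      Lam (Eop f) x q = Eop (Lam f) x q + Lam f x q) := by
  have hXo : IsOpen X := hX.1
  have hf' : Stmt2.Rep X m f := Stmt2.Rep.of_isQFunc hf
  exact ⟨fun x hx q hq => Stmt2.ED_comm hXo hf' x hx q hq,
         fun x hx q hq => Stmt2.EL_comm hXo hf' x hx q hq,
         fun x hx q hq => Stmt2.LamE hXo hf' x hx q hq⟩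

end
end

section
/- For every integer k ≥ 0 and every q-function f: q_0 · D^k f = D( Σ_{j=0}^{k−1} (−1)^j q_j · D^{k−1−j} f ) + (−1)^k q_k · f, where q_j · g denotes pointwise multiplication of the q-function g by the coordinate q_j. -/
noncomputable section

/-! ### Auxiliary development -/

open Function Finset

/-- Tameness: enough differentiability plus finite dependence. -/
def Tame (X : Set ℝ) (M : ℕ) (f : QFun) : Prop :=
  (∀ x ∈ X, ∀ q : ℕ → ℝ, 0 < q 0 → DifferentiableAt ℝ (fun t => f t q) x) ∧
  (∀ x ∈ X, ∀ q : ℕ → ℝ, 0 < q 0 → ∀ j : ℕ,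
      DifferentiableAt ℝ (fun t => f x (Function.update q j t)) (q j)) ∧
  (∀ j : ℕ, M < j → ∀ x q t, f x (Function.update q j t) = f x q)

lemma Tame.mono {X M M' f} (h : Tame X M f) (hMM : M ≤ M') : Tame X M' f :=
  ⟨h.1, h.2.1, fun j hj => h.2.2 j (lt_of_le_of_lt hMM hj)⟩

lemma pd_eq_zero_of_dep {M : ℕ} {f : QFun}
    (hdep : ∀ j : ℕ, M < j → ∀ x q t, f x (Function.update q j t) = f x q)
    {j : ℕ} (hj : M < j) (x : ℝ) (q : ℕ → ℝ) : pd j f x q = 0 := by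
  have : (fun t => f x (Function.update q j t)) = fun _ => f x q :=
    funext fun t => hdep j hj x q t
  rw [pd, this, deriv_const]

lemma Dop_eq_finsum {M : ℕ} {f : QFun}
    (hdep : ∀ j : ℕ, M < j → ∀ x q t, f x (Function.update q j t) = f x q)
    (x : ℝ) (q : ℕ → ℝ) :
    Dop f x q = pdx f x q + ∑ j ∈ Finset.range (M + 1), q (j + 1) * pd j f x q := by
  rw [Dop]
  congr 1
  refine tsum_eq_sum ?_
  intro j hj
  have hj' : M < j := by
    by_contra hc
    exact hj (Finset.mem_range.mpr (by omega))
  rw [pd_eq_zero_of_dep hdep hj', mul_zero]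

/-- update commutes with restriction to `Fin (m+1)` for small indices. -/
lemma update_restrict {m : ℕ} (q : ℕ → ℝ) (j : ℕ) (hj : j < m + 1) (t : ℝ) :
    (fun i : Fin (m + 1) => Function.update q j t i.val)
      = Function.update (fun i : Fin (m + 1) => q i.val) ⟨j, hj⟩ t := by
  funext i
  rcases eq_or_ne (i : ℕ) j with h | h
  · have hi : i = ⟨j, hj⟩ := Fin.ext h
    subst hi
    simp
  · rw [Function.update_of_ne h, Function.update_of_ne (by simpa [Fin.ext_iff] using h)]

lemma update_restrict_high {m : ℕ} (q : ℕ → ℝ) {j : ℕ} (hj : m + 1 ≤ j) (t : ℝ) :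
    (fun i : Fin (m + 1) => Function.update q j t i.val)
      = fun i : Fin (m + 1) => q i.val := by
  funext i
  have : (i : ℕ) ≠ j := by have := i.isLt; omega
  exact Function.update_of_ne this _ _

section Rep

variable {X : Set ℝ} {m : ℕ} {f : QFun} {F : ℝ × (Fin (m + 1) → ℝ) → ℝ}

lemma rep_dep (hrep : ∀ x q, f x q = F (x, fun i => q i.val)) :
    ∀ j : ℕ, m < j → ∀ x q t, f x (Function.update q j t) = f x q := by
  intro j hj x q t
  rw [hrep, hrep, update_restrict_high q (by omega) t]

lemma rep_pd (hrep : ∀ x q, f x q = F (x, fun i => q i.val))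
    (j : ℕ) (hj : j < m + 1) (x : ℝ) (q : ℕ → ℝ) :
    pd j f x q
      = deriv (fun t => F (x, Function.update (fun i : Fin (m+1) => q i.val) ⟨j, hj⟩ t)) (q j) := by
  rw [pd]
  congr 1
  funext t
  rw [hrep, update_restrict q j hj t]

lemma rep_pdx (hrep : ∀ x q, f x q = F (x, fun i => q i.val)) (x : ℝ) (q : ℕ → ℝ) :
    pdx f x q = deriv (fun t => F (t, fun i : Fin (m+1) => q i.val)) x := by
  rw [pdx]
  congr 1
  funext t
  rw [hrep]

lemma isOpen_S (hX : IsOpen X) (n : ℕ) :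
    IsOpen {p : ℝ × (Fin (n + 1) → ℝ) | p.1 ∈ X ∧ 0 < p.2 0} := by
  refine IsOpen.inter ?_ ?_
  · exact (hX.preimage continuous_fst)
  · exact isOpen_lt continuous_const ((continuous_apply (0 : Fin (n+1))).comp continuous_snd)

lemma diff_update (v : Fin (m+1) → ℝ) (j : Fin (m+1)) :
    ∀ t₀ : ℝ, HasDerivAt (fun t => Function.update v j t) (Pi.single j 1) t₀ := by
  intro t₀
  rw [hasDerivAt_pi]
  intro i
  rcases eq_or_ne i j with h | h
  · subst h
    simpa using (hasDerivAt_id' t₀)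
  · simp only [Function.update_of_ne h, Pi.single_eq_of_ne h]
    exact hasDerivAt_const t₀ _

/-- A q-function is tame. -/
lemma IsQFunc.tame (hX : IsOpen X) (hf : IsQFunc X m f) : Tame X m f := by
  obtain ⟨F, hF, hrep⟩ := hf
  have hS := isOpen_S hX m
  refine ⟨?_, ?_, rep_dep hrep⟩
  · intro x hx q hq
    have hmem : ((x, fun i : Fin (m+1) => q i.val) : ℝ × (Fin (m+1) → ℝ))
        ∈ {p : ℝ × (Fin (m + 1) → ℝ) | p.1 ∈ X ∧ 0 < p.2 0} := ⟨hx, hq⟩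
    have hdF : DifferentiableAt ℝ F (x, fun i : Fin (m+1) => q i.val) :=
      (hF.contDiffAt (hS.mem_nhds hmem)).differentiableAt (by simp)
    have : DifferentiableAt ℝ (fun t : ℝ => F (t, fun i : Fin (m+1) => q i.val)) x :=
      hdF.comp x (differentiableAt_fun_id.prodMk (differentiableAt_const _))
    refine this.congr_of_eventuallyEq ?_
    filter_upwards with t using (hrep t q)
  · intro x hx q hq j
    rcases lt_or_ge j (m+1) with hj | hj
    · have heq : (fun t => f x (Function.update q j t))
          = fun t => F (x, Function.update (fun i : Fin (m+1) => q i.val) ⟨j, hj⟩ t) := by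
        funext t; rw [hrep, update_restrict q j hj t]
      rw [heq]
      have hup : Function.update (fun i : Fin (m+1) => q i.val) ⟨j, hj⟩ (q j)
          = fun i : Fin (m+1) => q i.val := by
        have : q j = (fun i : Fin (m+1) => q i.val) ⟨j, hj⟩ := rfl
        rw [this, Function.update_eq_self]
      have hmem : ((x, fun i : Fin (m+1) => q i.val) : ℝ × (Fin (m+1) → ℝ))
          ∈ {p : ℝ × (Fin (m + 1) → ℝ) | p.1 ∈ X ∧ 0 < p.2 0} := ⟨hx, hq⟩
      have hdF : DifferentiableAt ℝ F (x, fun i : Fin (m+1) => q i.val) :=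
        (hF.contDiffAt (hS.mem_nhds hmem)).differentiableAt (by simp)
      have hcurve : DifferentiableAt ℝ
          (fun t : ℝ => ((x, Function.update (fun i : Fin (m+1) => q i.val) ⟨j, hj⟩ t) :
            ℝ × (Fin (m+1) → ℝ))) (q j) :=
        (differentiableAt_const _).prodMk
          (diff_update (fun i : Fin (m+1) => q i.val) ⟨j, hj⟩ (q j)).differentiableAt
      have hdF' : DifferentiableAt ℝ F
          (x, Function.update (fun i : Fin (m+1) => q i.val) ⟨j, hj⟩ (q j)) := by
        rw [hup]; exact hdF
      exact hdF'.comp (q j) hcurve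
    · have heq : (fun t => f x (Function.update q j t)) = fun _ => f x q := by
        funext t; exact rep_dep hrep j (by omega) x q t
      rw [heq]
      exact differentiableAt_const _

/-- The key closure lemma: `Dop` maps q-functions of order `m` to order `m+1`. -/
lemma IsQFunc.dop (hX : IsOpen X) (hf : IsQFunc X m f) : IsQFunc X (m + 1) (Dop f) := by
  obtain ⟨F, hF, hrep⟩ := hf
  set S := {p : ℝ × (Fin (m + 1) → ℝ) | p.1 ∈ X ∧ 0 < p.2 0} with hSdef
  have hS : IsOpen S := isOpen_S hX m
  -- the representing function for `Dop f`
  set G : ℝ × (Fin (m + 2) → ℝ) → ℝ := fun p =>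
    deriv (fun t => F (t, fun i : Fin (m+1) => p.2 i.castSucc)) p.1
      + ∑ j : Fin (m+1), p.2 j.succ *
          deriv (fun t => F (p.1,
            Function.update (fun i : Fin (m+1) => p.2 i.castSucc) j t)) (p.2 j.castSucc)
    with hGdef
  -- a nicer formula valid on the open set
  set Gnice : ℝ × (Fin (m + 2) → ℝ) → ℝ := fun p =>
    (fderiv ℝ F (p.1, fun i : Fin (m+1) => p.2 i.castSucc))
      (1, fun j : Fin (m+1) => p.2 j.succ) with hGnicedef
  have hrepG : ∀ x q, Dop f x q = G (x, fun i : Fin (m+2) => q i.val) := by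
    intro x q
    rw [Dop_eq_finsum (rep_dep hrep) x q, hGdef, rep_pdx hrep x q,
        Finset.sum_range fun j => q (j+1) * pd j f x q]
    simp only
    congr 1
    refine Finset.sum_congr rfl fun j _ => ?_
    rw [rep_pd hrep j.val j.isLt x q]
    simp [Fin.coe_castSucc]
  have hagree : ∀ p ∈ {p : ℝ × (Fin (m + 2) → ℝ) | p.1 ∈ X ∧ 0 < p.2 0}, Gnice p = G p := by
    rintro ⟨x, r⟩ ⟨hx, hr⟩
    set v : Fin (m+1) → ℝ := fun i => r i.castSucc with hvdef
    have hv0 : v 0 = r 0 := by simp [hvdef]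
    have hmem : ((x, v) : ℝ × (Fin (m+1) → ℝ)) ∈ S :=
      ⟨hx, by show (0:ℝ) < r (Fin.castSucc 0); rw [Fin.castSucc_zero]; exact hr⟩
    set L := fderiv ℝ F (x, v) with hLdef
    have hdF : DifferentiableAt ℝ F (x, v) :=
      (hF.contDiffAt (hS.mem_nhds hmem)).differentiableAt (by simp)
    have hL : HasFDerivAt F L (x, v) := hdF.hasFDerivAt
    have term1 : deriv (fun t => F (t, v)) x = L (1, 0) := by
      have hc : HasDerivAt (fun t : ℝ => ((t, v) : ℝ × (Fin (m+1) → ℝ)))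
          ((1 : ℝ), (0 : Fin (m+1) → ℝ)) x := (hasDerivAt_id x).prodMk (hasDerivAt_const x v)
      exact (hL.comp_hasDerivAt x hc).deriv
    have term2 : ∀ j : Fin (m+1),
        deriv (fun t => F (x, Function.update v j t)) (v j) = L (0, Pi.single j 1) := by
      intro j
      have hc : HasDerivAt (fun t : ℝ => ((x, Function.update v j t) : ℝ × (Fin (m+1) → ℝ)))
          ((0 : ℝ), Pi.single j 1) (v j) :=
        (hasDerivAt_const (v j) x).prodMk (diff_update v j (v j))
      have hL' : HasFDerivAt F L (x, Function.update v j (v j)) := by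
        rw [Function.update_eq_self]; exact hL
      exact (hL'.comp_hasDerivAt (v j) hc).deriv
    set w : Fin (m+1) → ℝ := fun j => r j.succ with hwdef
    have hsum : (∑ j : Fin (m+1), w j • (((0 : ℝ), Pi.single j (1 : ℝ)) : ℝ × (Fin (m+1) → ℝ)))
        = (((0 : ℝ), w) : ℝ × (Fin (m+1) → ℝ)) := by
      rw [Prod.ext_iff]
      refine ⟨?_, ?_⟩
      · rw [Prod.fst_sum]; simp
      · rw [Prod.snd_sum]
        simp only [Prod.smul_mk, Prod.snd]
        have h1 : ∀ j : Fin (m+1), w j • (Pi.single j (1:ℝ) : Fin (m+1) → ℝ)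
            = (Pi.single j (w j) : Fin (m+1) → ℝ) := by
          intro j
          rw [← Pi.single_smul, smul_eq_mul, mul_one]
        rw [Finset.sum_congr rfl fun j _ => h1 j]
        exact Finset.univ_sum_single w
    have key : L ((1 : ℝ), w)
        = L ((1 : ℝ), (0 : Fin (m+1) → ℝ))
          + ∑ j : Fin (m+1), w j * L (((0 : ℝ), Pi.single j (1 : ℝ)) : ℝ × (Fin (m+1) → ℝ)) := by
      have hdecomp : (((1 : ℝ), w) : ℝ × (Fin (m+1) → ℝ))
          = ((1 : ℝ), (0 : Fin (m+1) → ℝ)) + (((0 : ℝ), w) : ℝ × (Fin (m+1) → ℝ)) := by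
        rw [Prod.mk_add_mk]
        norm_num
      rw [hdecomp, map_add, ← hsum, map_sum]
      congr 1
      refine Finset.sum_congr rfl fun j _ => ?_
      rw [map_smul, smul_eq_mul]
    have hGniceval : Gnice (x, r) = L ((1 : ℝ), w) := by
      rw [hGnicedef]
    rw [hGniceval, key, hGdef]
    simp only
    rw [← hvdef, term1]
    congr 1
    refine Finset.sum_congr rfl fun j _ => ?_
    show w j * L (0, Pi.single j 1)
        = w j * deriv (fun t => F (x, Function.update v j t)) (v j)
    rw [term2 j]
  have hGnice : ContDiffOn ℝ (⊤ : ℕ∞) Gnice {p : ℝ × (Fin (m + 2) → ℝ) | p.1 ∈ X ∧ 0 < p.2 0} := by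
    have h1 : ContDiffOn ℝ (⊤ : ℕ∞) (fun p => fderiv ℝ F p) S := hF.fderiv_of_isOpen hS (by simp)
    have hθ : ContDiff ℝ (⊤ : ℕ∞) (fun p : ℝ × (Fin (m+2) → ℝ) =>
        ((p.1, fun i : Fin (m+1) => p.2 i.castSucc) : ℝ × (Fin (m+1) → ℝ))) :=
      contDiff_fst.prodMk (contDiff_pi.mpr fun i =>
        (ContinuousLinearMap.proj (R := ℝ) (φ := fun _ : Fin (m+2) => ℝ)
          i.castSucc).contDiff.comp contDiff_snd)
    have hmaps : Set.MapsTo (fun p : ℝ × (Fin (m+2) → ℝ) =>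
        ((p.1, fun i : Fin (m+1) => p.2 i.castSucc) : ℝ × (Fin (m+1) → ℝ)))
        {p : ℝ × (Fin (m + 2) → ℝ) | p.1 ∈ X ∧ 0 < p.2 0} S := by
      rintro ⟨x, r⟩ ⟨hx, hr⟩
      exact ⟨hx, by simpa using hr⟩
    have hψ : ContDiff ℝ (⊤ : ℕ∞) (fun p : ℝ × (Fin (m+2) → ℝ) =>
        (((1 : ℝ), fun j : Fin (m+1) => p.2 j.succ) : ℝ × (Fin (m+1) → ℝ))) :=
      contDiff_const.prodMk (contDiff_pi.mpr fun j =>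
        (ContinuousLinearMap.proj (R := ℝ) (φ := fun _ : Fin (m+2) => ℝ)
          j.succ).contDiff.comp contDiff_snd)
    exact (h1.comp hθ.contDiffOn hmaps).clm_apply hψ.contDiffOn
  exact ⟨G, hGnice.congr (fun p hp => (hagree p hp).symm), hrepG⟩

lemma IsQFunc.dop_iter (hX : IsOpen X) (hf : IsQFunc X m f) (i : ℕ) :
    IsQFunc X (m + i) (Dop^[i] f) := by
  induction i with
  | zero => simpa using hf
  | succ n ih =>
      rw [Function.iterate_succ_apply']
      exact ih.dop hX

end Rep

section Algebra

variable {X : Set ℝ} {M : ℕ} {g h : QFun}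

lemma tame_const (c : ℝ) : Tame X M (fun _ _ => c) :=
  ⟨fun _ _ _ _ => differentiableAt_const _, fun _ _ _ _ _ => differentiableAt_const _,
    fun _ _ _ _ _ => rfl⟩

lemma Tame.add (hg : Tame X M g) (hh : Tame X M h) :
    Tame X M (fun y p => g y p + h y p) := by
  refine ⟨fun x hx q hq => (hg.1 x hx q hq).add (hh.1 x hx q hq),
    fun x hx q hq j => (hg.2.1 x hx q hq j).add (hh.2.1 x hx q hq j),
    fun j hj x q t => by simp only; rw [hg.2.2 j hj x q t, hh.2.2 j hj x q t]⟩

lemma Tame.const_mul (hg : Tame X M g) (c : ℝ) :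
    Tame X M (fun y p => c * g y p) := by
  refine ⟨fun x hx q hq => (hg.1 x hx q hq).const_mul c,
    fun x hx q hq j => (hg.2.1 x hx q hq j).const_mul c,
    fun j hj x q t => by simp only; rw [hg.2.2 j hj x q t]⟩

lemma Tame.coord_mul (hg : Tame X M g) {j : ℕ} (hj : j ≤ M) :
    Tame X M (fun y p => p j * g y p) := by
  refine ⟨?_, ?_, ?_⟩
  · intro x hx q hq
    exact ((hg.1 x hx q hq).const_mul (q j))
  · intro x hx q hq i
    rcases eq_or_ne i j with rfl | hij
    · have heq : (fun t => Function.update q i t i * g x (Function.update q i t))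
          = fun t => t * g x (Function.update q i t) := by
        funext t; rw [Function.update_self]
      simp only
      rw [heq]
      exact DifferentiableAt.mul differentiableAt_fun_id (hg.2.1 x hx q hq i)
    · have heq : (fun t => Function.update q i t j * g x (Function.update q i t))
          = fun t => q j * g x (Function.update q i t) := by
        funext t; rw [Function.update_of_ne (Ne.symm hij)]
      simp only
      rw [heq]
      exact ((hg.2.1 x hx q hq i).const_mul (q j))
  · intro i hi x q t
    simp only
    rw [hg.2.2 i hi x q t, Function.update_of_ne (by omega) ]

lemma tame_finsum (s : Finset ℕ) (g : ℕ → QFun)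
    (hs : ∀ j ∈ s, Tame X M (g j)) : Tame X M (fun y p => ∑ j ∈ s, g j y p) := by
  classical
  induction s using Finset.induction_on with
  | empty =>
      have he : (fun (y : ℝ) (p : ℕ → ℝ) => ∑ j ∈ (∅ : Finset ℕ), g j y p)
          = fun _ _ => (0 : ℝ) := by
        funext y p; simp
      rw [he]
      exact tame_const 0
  | @insert a s ha ih =>
      have he : (fun (y : ℝ) (p : ℕ → ℝ) => ∑ j ∈ insert a s, g j y p)
          = fun y p => g a y p + ∑ j ∈ s, g j y p := by
        funext y p; rw [Finset.sum_insert ha]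
      rw [he]
      exact (hs a (Finset.mem_insert_self a s)).add
        (ih fun j hj' => hs j (Finset.mem_insert_of_mem hj'))

lemma Dop_add (hg : Tame X M g) (hh : Tame X M h) {x : ℝ} (hx : x ∈ X)
    {q : ℕ → ℝ} (hq : 0 < q 0) :
    Dop (fun y p => g y p + h y p) x q = Dop g x q + Dop h x q := by
  rw [Dop_eq_finsum (M := M) (hg.add hh).2.2, Dop_eq_finsum (M := M) hg.2.2,
    Dop_eq_finsum (M := M) hh.2.2]
  have hpdx : pdx (fun y p => g y p + h y p) x q = pdx g x q + pdx h x q := by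
    rw [pdx, pdx, pdx]
    exact deriv_add (hg.1 x hx q hq) (hh.1 x hx q hq)
  have hpd : ∀ j, pd j (fun y p => g y p + h y p) x q = pd j g x q + pd j h x q := by
    intro j
    rw [pd, pd, pd]
    exact deriv_add (hg.2.1 x hx q hq j) (hh.2.1 x hx q hq j)
  rw [hpdx, Finset.sum_congr rfl fun j _ => by rw [hpd j, mul_add]]
  rw [Finset.sum_add_distrib]
  ring

lemma Dop_const_mul (c : ℝ) (g : QFun) (x : ℝ) (q : ℕ → ℝ) :
    Dop (fun y p => c * g y p) x q = c * Dop g x q := by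
  rw [Dop, Dop]
  have h1 : pdx (fun y p => c * g y p) x q = c * pdx g x q := by
    rw [pdx, pdx]
    exact deriv_const_mul_field c
  have h2 : ∀ j, pd j (fun y p => c * g y p) x q = c * pd j g x q := by
    intro j
    rw [pd, pd]
    exact deriv_const_mul_field c
  rw [h1]
  have h3 : ∑' j : ℕ, q (j + 1) * pd j (fun y p => c * g y p) x q
      = c * ∑' j : ℕ, q (j + 1) * pd j g x q := by
    rw [← tsum_mul_left]
    exact tsum_congr fun j => by rw [h2 j]; ring
  rw [h3]
  ring

lemma Dop_coord_mul (hg : Tame X M g) {j : ℕ} (hj : j ≤ M) {x : ℝ} (hx : x ∈ X)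
    {q : ℕ → ℝ} (hq : 0 < q 0) :
    Dop (fun y p => p j * g y p) x q = q (j + 1) * g x q + q j * Dop g x q := by
  have hT : Tame X M (fun y p => p j * g y p) := hg.coord_mul hj
  rw [Dop_eq_finsum (M := M) hT.2.2, Dop_eq_finsum (M := M) hg.2.2]
  have hpdx : pdx (fun y p => p j * g y p) x q = q j * pdx g x q := by
    rw [pdx, pdx]
    exact deriv_const_mul_field (q j)
  have hpdj : pd j (fun y p => p j * g y p) x q = g x q + q j * pd j g x q := by
    rw [pd, pd]
    have heq : (fun t => Function.update q j t j * g x (Function.update q j t))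
        = fun t => t * g x (Function.update q j t) := by
      funext t; rw [Function.update_self]
    rw [heq]
    have hd : HasDerivAt (fun t => g x (Function.update q j t))
        (deriv (fun t => g x (Function.update q j t)) (q j)) (q j) :=
      (hg.2.1 x hx q hq j).hasDerivAt
    have hmul := (hasDerivAt_id (q j)).mul hd
    rw [Function.update_eq_self] at hmul
    have hder := hmul.deriv
    simp only [id_eq, Pi.mul_def] at hder
    rw [hder]
    ring
  have hpdi : ∀ i, i ≠ j → pd i (fun y p => p j * g y p) x q = q j * pd i g x q := by
    intro i hij
    rw [pd, pd]
    have heq : (fun t => Function.update q i t j * g x (Function.update q i t))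
        = fun t => q j * g x (Function.update q i t) := by
      funext t; rw [Function.update_of_ne (Ne.symm hij)]
    rw [heq]
    exact deriv_const_mul_field (q j)
  have hjmem : j ∈ Finset.range (M + 1) := Finset.mem_range.mpr (by omega)
  rw [hpdx, ← Finset.add_sum_erase _ _ hjmem, ← Finset.add_sum_erase _ _ hjmem, hpdj]
  rw [Finset.sum_congr rfl fun i hi => by
    rw [hpdi i (Finset.mem_erase.mp hi).1]]
  have hfac : ∑ i ∈ (Finset.range (M+1)).erase j, q (i + 1) * (q j * pd i g x q)
      = q j * ∑ i ∈ (Finset.range (M+1)).erase j, q (i + 1) * pd i g x q := by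
    rw [Finset.mul_sum]
    exact Finset.sum_congr rfl fun i _ => by ring
  rw [hfac]
  ring

end Algebra


/-- For every `k ≥ 0` and every q-function `f`,
`q₀ ⬝ D^k f = D (Σ_{j=0}^{k-1} (-1)^j q_j ⬝ D^{k-1-j} f) + (-1)^k q_k ⬝ f`. -/
theorem stmt4 (X : Set ℝ) (hX : IsOpenInterval X) (m : ℕ) (f : QFun)
    (hf : IsQFunc X m f) (k : ℕ) :
    ∀ x ∈ X, ∀ q : ℕ → ℝ, 0 < q 0 →
      q 0 * Dop^[k] f x q =
        Dop (fun y p => ∑ j ∈ Finset.range k,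
              (-1 : ℝ) ^ j * p j * Dop^[k - 1 - j] f y p) x q
          + (-1 : ℝ) ^ k * q k * f x q := by
  obtain ⟨hXopen, -, -⟩ := hX
  induction k generalizing m f with
  | zero =>
      intro x hx q hq
      have he : (fun (y : ℝ) (p : ℕ → ℝ) => ∑ j ∈ Finset.range 0,
          (-1 : ℝ) ^ j * p j * Dop^[0 - 1 - j] f y p) = fun _ _ => (0 : ℝ) := by
        funext y p; simp
      rw [he]
      have hD0 : Dop (fun _ _ => (0 : ℝ)) x q = 0 := by
        rw [Dop]
        have h1 : pdx (fun _ _ => (0 : ℝ)) x q = 0 := by rw [pdx]; exact deriv_const _ _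
        have h2 : ∀ j, pd j (fun _ _ => (0 : ℝ)) x q = 0 := fun j => by
          rw [pd]
          exact deriv_const _ _
        simp [h1, h2]
      rw [hD0]
      simp
  | succ k ih =>
      intro x hx q hq
      have hDf : IsQFunc X (m + 1) (Dop f) := hf.dop hXopen
      have IH := ih (m + 1) (Dop f) hDf x hx q hq
      -- rewrite the sum as Φ + χ
      have hΨ : (fun (y : ℝ) (p : ℕ → ℝ) => ∑ j ∈ Finset.range (k + 1),
            (-1 : ℝ) ^ j * p j * Dop^[k + 1 - 1 - j] f y p)
          = fun y p =>
            (∑ j ∈ Finset.range k, (-1 : ℝ) ^ j * p j * Dop^[k - 1 - j] (Dop f) y p)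
              + (-1 : ℝ) ^ k * (p k * f y p) := by
        funext y p
        rw [Finset.sum_range_succ]
        congr 1
        · refine Finset.sum_congr rfl fun j hj => ?_
          have hj' : j < k := Finset.mem_range.mp hj
          rw [show k + 1 - 1 - j = (k - 1 - j) + 1 by omega, Function.iterate_succ_apply]
        · rw [show k + 1 - 1 - k = 0 by omega]
          simp [mul_assoc]
      rw [hΨ]
      -- tameness
      set M := m + k + 1 with hM
      have hTf : Tame X M f := (hf.tame hXopen).mono (by omega)
      have hTΦ : Tame X M (fun y p => ∑ j ∈ Finset.range k,
          (-1 : ℝ) ^ j * p j * Dop^[k - 1 - j] (Dop f) y p) := by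
        refine tame_finsum (Finset.range k)
          (fun j => fun y p => (-1 : ℝ) ^ j * p j * Dop^[k - 1 - j] (Dop f) y p) ?_
        intro j hj
        have hj' : j < k := Finset.mem_range.mp hj
        have hQ : IsQFunc X ((m + 1) + (k - 1 - j)) (Dop^[k - 1 - j] (Dop f)) :=
          hDf.dop_iter hXopen (k - 1 - j)
        have hT : Tame X M (Dop^[k - 1 - j] (Dop f)) :=
          (hQ.tame hXopen).mono (by omega)
        have he : (fun (y : ℝ) (p : ℕ → ℝ) => (-1 : ℝ) ^ j * p j * Dop^[k - 1 - j] (Dop f) y p)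
            = fun y p => (-1 : ℝ) ^ j * (p j * Dop^[k - 1 - j] (Dop f) y p) := by
          funext y p; ring
        show Tame X M fun y p => (-1 : ℝ) ^ j * p j * Dop^[k - 1 - j] (Dop f) y p
        rw [he]
        exact (hT.coord_mul (by omega)).const_mul _
      have hTχ : Tame X M (fun y p => (-1 : ℝ) ^ k * (p k * f y p)) :=
        (hTf.coord_mul (by omega)).const_mul _
      rw [Dop_add hTΦ hTχ hx hq]
      have hDχ : Dop (fun y p => (-1 : ℝ) ^ k * (p k * f y p)) x q
          = (-1 : ℝ) ^ k * (q (k + 1) * f x q + q k * Dop f x q) := by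
        rw [Dop_const_mul ((-1 : ℝ) ^ k) (fun y p => p k * f y p) x q,
          Dop_coord_mul hTf (by omega) hx hq]
      rw [hDχ, show Dop^[k + 1] f x q = Dop^[k] (Dop f) x q from by
        rw [Function.iterate_succ_apply]]
      rw [pow_succ]
      linear_combination IH

end
end

section
/- For every integer r ≥ 0 and every q-function f: D(B_r f) = ∂f/∂q_r − B_{r−1} f, and B_r(D f) = ∂f/∂q_r. -/
noncomputable section

namespace Stmt5Aux
open Function Filter

variable {X : Set ℝ}

def U (X : Set ℝ) (n : ℕ) : Set (ℝ × (Fin (n + 1) → ℝ)) := {p | p.1 ∈ X ∧ 0 < p.2 0}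

def pr (n : ℕ) (q : ℕ → ℝ) : Fin (n + 1) → ℝ := fun i => q i.val

def QRep (X : Set ℝ) (n : ℕ) (G : ℝ × (Fin (n + 1) → ℝ) → ℝ) (g : QFun) : Prop :=
  ContDiffOn ℝ (⊤ : ℕ∞) G (U X n) ∧ ∀ x ∈ X, ∀ q : ℕ → ℝ, 0 < q 0 → g x q = G (x, pr n q)

def HasRep (X : Set ℝ) (g : QFun) : Prop := ∃ n G, QRep X n G g

lemma isOpen_U (hX : IsOpen X) (n : ℕ) : IsOpen (U X n) := by
  have h1 : IsOpen {p : ℝ × (Fin (n + 1) → ℝ) | p.1 ∈ X} := hX.preimage continuous_fst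
  have h2 : IsOpen {p : ℝ × (Fin (n + 1) → ℝ) | 0 < p.2 0} :=
    isOpen_Ioi.preimage ((continuous_apply _).comp continuous_snd)
  exact h1.inter h2

lemma mem_U {n : ℕ} {x : ℝ} {q : ℕ → ℝ} (hx : x ∈ X) (hq : 0 < q 0) :
    ((x, pr n q) : ℝ × (Fin (n + 1) → ℝ)) ∈ U X n :=
  ⟨hx, by simpa [pr] using hq⟩

lemma QRep.diffAt (hX : IsOpen X) {n G g} (h : QRep X n G g)
    {p : ℝ × (Fin (n + 1) → ℝ)} (hp : p ∈ U X n) : DifferentiableAt ℝ G p :=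
  (h.1.differentiableOn (by simp)).differentiableAt ((isOpen_U hX n).mem_nhds hp)

lemma hasDerivAt_line {E : Type*} [NormedAddCommGroup E] [NormedSpace ℝ E] {G : E → ℝ} {p : E}
    (hG : DifferentiableAt ℝ G p) (v : E) (t₀ : ℝ) :
    HasDerivAt (fun t => G (p + (t - t₀) • v)) (fderiv ℝ G p v) t₀ := by
  have hline : HasDerivAt (fun t : ℝ => p + (t - t₀) • v) v t₀ := by
    simpa using (((hasDerivAt_id t₀).sub_const t₀).smul_const v).const_add p
  have hGp : HasFDerivAt G (fderiv ℝ G p) (p + (t₀ - t₀) • v) := by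
    simpa using hG.hasFDerivAt
  exact hGp.comp_hasDerivAt t₀ hline

lemma update_eq {n : ℕ} (v : Fin (n + 1) → ℝ) (j : Fin (n + 1)) (t : ℝ) :
    Function.update v j t = v + (t - v j) • (Pi.single j (1 : ℝ) : Fin (n + 1) → ℝ) := by
  funext i
  by_cases hij : i = j
  · subst hij; simp
  · simp [Function.update_of_ne hij, Pi.single_eq_of_ne hij]

lemma ev_update_pos {q : ℕ → ℝ} (hq : 0 < q 0) (k : ℕ) :
    ∀ᶠ t in nhds (q k), 0 < Function.update q k t 0 := by
  rcases Nat.eq_zero_or_pos k with rfl | hk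
  · filter_upwards [eventually_gt_nhds hq] with t ht
    simpa using ht
  · exact Eventually.of_forall fun t => by
      rw [Function.update_of_ne (by omega)]; exact hq

lemma pr_update {n : ℕ} (q : ℕ → ℝ) (j : Fin (n + 1)) (t : ℝ) :
    pr n (Function.update q j.val t) = Function.update (pr n q) j t := by
  funext i
  by_cases hij : i = j
  · subst hij; simp [pr]
  · rw [Function.update_of_ne hij]
    exact Function.update_of_ne (fun hc => hij (Fin.ext hc)) _ _

lemma pd_hasDerivAt (hX : IsOpen X) {n G g} (h : QRep X n G g) {x : ℝ} {q : ℕ → ℝ}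
    (hx : x ∈ X) (hq : 0 < q 0) (j : Fin (n + 1)) :
    HasDerivAt (fun t => g x (Function.update q j.val t))
      (fderiv ℝ G (x, pr n q) (0, Pi.single j 1)) (q j.val) := by
  have hlin := hasDerivAt_line (h.diffAt hX (mem_U hx hq)) ((0 : ℝ), Pi.single j (1 : ℝ)) (q j.val)
  apply hlin.congr_of_eventuallyEq
  filter_upwards [ev_update_pos hq j.val] with t ht
  rw [h.2 x hx _ ht]
  congr 1
  rw [Prod.smul_mk, Prod.mk_add_mk, smul_zero, add_zero, pr_update, update_eq]
  rfl

lemma pd_eq (hX : IsOpen X) {n G g} (h : QRep X n G g) {x : ℝ} {q : ℕ → ℝ}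
    (hx : x ∈ X) (hq : 0 < q 0) (j : Fin (n + 1)) :
    pd j.val g x q = fderiv ℝ G (x, pr n q) (0, Pi.single j 1) :=
  (pd_hasDerivAt hX h hx hq j).deriv

lemma pdx_hasDerivAt (hX : IsOpen X) {n G g} (h : QRep X n G g) {x : ℝ} {q : ℕ → ℝ}
    (hx : x ∈ X) (hq : 0 < q 0) :
    HasDerivAt (fun t => g t q) (fderiv ℝ G (x, pr n q) (1, 0)) x := by
  have hlin := hasDerivAt_line (h.diffAt hX (mem_U hx hq)) ((1 : ℝ), (0 : Fin (n + 1) → ℝ)) x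
  apply hlin.congr_of_eventuallyEq
  filter_upwards [hX.mem_nhds hx] with t ht
  rw [h.2 t ht q hq]
  congr 1
  rw [Prod.smul_mk, Prod.mk_add_mk, smul_zero, add_zero, smul_eq_mul, mul_one]
  congr 1
  ring

lemma pd_high {n G g} (h : QRep X n G g) {x : ℝ} {q : ℕ → ℝ}
    (hx : x ∈ X) (hq : 0 < q 0) {k : ℕ} (hk : n + 1 ≤ k) :
    pd k g x q = 0 := by
  have hfun : (fun t => g x (Function.update q k t)) = fun _ => G (x, pr n q) := by
    funext t
    rw [h.2 x hx _ (by rw [Function.update_of_ne (by omega)]; exact hq)]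
    congr 2
    funext i
    exact Function.update_of_ne (by omega) _ _
  show deriv (fun t => g x (Function.update q k t)) (q k) = 0
  rw [hfun, deriv_const]

lemma contDiffOn_dd (hX : IsOpen X) {n : ℕ} {G : ℝ × (Fin (n + 1) → ℝ) → ℝ}
    (hG : ContDiffOn ℝ (⊤ : ℕ∞) G (U X n)) (v : ℝ × (Fin (n + 1) → ℝ)) :
    ContDiffOn ℝ (⊤ : ℕ∞) (fun p => fderiv ℝ G p v) (U X n) := by
  have hU := isOpen_U hX n
  have h1 : ContDiffOn ℝ (⊤ : ℕ∞) (fun p => fderivWithin ℝ G (U X n) p) (U X n) :=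
    hG.fderivWithin hU.uniqueDiffOn (by exact (by simp))
  have h2 : ContDiffOn ℝ (⊤ : ℕ∞) (fun p => fderiv ℝ G p) (U X n) :=
    h1.congr fun p hp => (fderivWithin_of_isOpen hU hp).symm
  exact (ContinuousLinearMap.apply ℝ ℝ v).contDiff.comp_contDiffOn h2

lemma QRep.pd (hX : IsOpen X) {n G g} (h : QRep X n G g) (j : Fin (n + 1)) :
    QRep X n (fun p => fderiv ℝ G p (0, Pi.single j 1)) (pd j.val g) :=
  ⟨contDiffOn_dd hX h.1 _, fun x hx q hq => pd_eq hX h hx hq j⟩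

def trL (n : ℕ) : (ℝ × (Fin (n + 2) → ℝ)) →L[ℝ] (ℝ × (Fin (n + 1) → ℝ)) :=
  (ContinuousLinearMap.id ℝ ℝ).prodMap
    (ContinuousLinearMap.pi fun i : Fin (n + 1) => ContinuousLinearMap.proj i.castSucc)

lemma trL_apply (n : ℕ) (p : ℝ × (Fin (n + 2) → ℝ)) :
    trL n p = (p.1, fun i : Fin (n + 1) => p.2 i.castSucc) := rfl

lemma trL_mapsTo (n : ℕ) : Set.MapsTo (trL n) (U X (n + 1)) (U X n) := fun p hp =>
  ⟨hp.1, by simpa [trL_apply, Fin.castSucc_zero] using hp.2⟩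

lemma trL_pr (n : ℕ) (x : ℝ) (q : ℕ → ℝ) : trL n (x, pr (n + 1) q) = (x, pr n q) := rfl


lemma dop_eval (hX : IsOpen X) {n G g} (h : QRep X n G g) {x : ℝ} {q : ℕ → ℝ}
    (hx : x ∈ X) (hq : 0 < q 0) :
    Dop g x q = fderiv ℝ G (x, pr n q) (1, 0)
      + ∑ j : Fin (n + 1), q (j.val + 1) * fderiv ℝ G (x, pr n q) (0, Pi.single j 1) := by
  have h1 : pdx g x q = fderiv ℝ G (x, pr n q) (1, 0) := (pdx_hasDerivAt hX h hx hq).deriv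
  have h2 : ∑' j : ℕ, q (j + 1) * pd j g x q
      = ∑ j ∈ Finset.range (n + 1), q (j + 1) * pd j g x q :=
    tsum_eq_sum (fun k hk => by
      rw [pd_high h hx hq (by simpa using hk), mul_zero])
  show pdx g x q + ∑' j : ℕ, q (j + 1) * pd j g x q = _
  rw [h1, h2, ← Fin.sum_univ_eq_sum_range (fun k => q (k + 1) * pd k g x q) (n + 1)]
  congr 1
  refine Finset.sum_congr rfl fun j _ => ?_
  rw [pd_eq hX h hx hq j]

def DG (n : ℕ) (G : ℝ × (Fin (n + 1) → ℝ) → ℝ) : ℝ × (Fin (n + 2) → ℝ) → ℝ := fun p =>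
  fderiv ℝ G (trL n p) (1, 0)
    + ∑ j : Fin (n + 1), p.2 j.succ * fderiv ℝ G (trL n p) (0, Pi.single j 1)

lemma QRep.dop (hX : IsOpen X) {n G g} (h : QRep X n G g) :
    QRep X (n + 1) (DG n G) (Dop g) := by
  constructor
  · have htr : ContDiff ℝ (⊤ : ℕ∞) (trL n) := (trL n).contDiff
    have hmaps := trL_mapsTo (X := X) n
    have hA : ContDiffOn ℝ (⊤ : ℕ∞) (fun p => fderiv ℝ G (trL n p) ((1 : ℝ), 0)) (U X (n + 1)) :=
      (contDiffOn_dd hX h.1 _).comp htr.contDiffOn hmaps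
    have hB : ∀ j : Fin (n + 1), ContDiffOn ℝ (⊤ : ℕ∞)
        (fun p : ℝ × (Fin (n + 2) → ℝ) => p.2 j.succ * fderiv ℝ G (trL n p) (0, Pi.single j 1))
        (U X (n + 1)) := by
      intro j
      have hc : ContDiff ℝ (⊤ : ℕ∞) (fun p : ℝ × (Fin (n + 2) → ℝ) => p.2 j.succ) :=
        (ContinuousLinearMap.proj (R := ℝ) (φ := fun _ : Fin (n + 2) => ℝ)
          j.succ).contDiff.comp contDiff_snd
      exact hc.contDiffOn.mul ((contDiffOn_dd hX h.1 _).comp htr.contDiffOn hmaps)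
    exact hA.add (ContDiffOn.sum fun j _ => hB j)
  · intro x hx q hq
    rw [dop_eval hX h hx hq]
    show _ = fderiv ℝ G (trL n (x, pr (n+1) q)) (1, 0)
      + ∑ j : Fin (n + 1), pr (n+1) q j.succ * fderiv ℝ G (trL n (x, pr (n+1) q)) (0, Pi.single j 1)
    rw [trL_pr]
    simp [pr, Fin.val_succ]

lemma fderiv_swap (hX : IsOpen X) {n : ℕ} {G : ℝ × (Fin (n + 1) → ℝ) → ℝ}
    (hG : ContDiffOn ℝ (⊤ : ℕ∞) G (U X n)) {p : ℝ × (Fin (n + 1) → ℝ)} (hp : p ∈ U X n)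
    (v w : ℝ × (Fin (n + 1) → ℝ)) :
    fderiv ℝ (fun y => fderiv ℝ G y w) p v = fderiv ℝ (fun y => fderiv ℝ G y v) p w := by
  have h : ContDiffAt ℝ (⊤ : ℕ∞) G p := hG.contDiffAt ((isOpen_U hX n).mem_nhds hp)
  have hd : DifferentiableAt ℝ (fderiv ℝ G) p :=
    (h.fderiv_right (m := (⊤ : ℕ∞)) (by simp)).differentiableAt (by simp)
  have hsym := h.isSymmSndFDerivAt (by rw [minSmoothness_of_isRCLikeNormedField]; exact WithTop.coe_le_coe.mpr le_top)
  rw [fderiv_clm_apply hd (differentiableAt_const w), fderiv_clm_apply hd (differentiableAt_const v)]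
  simp [hsym.eq v w]

lemma fderiv_DG (hX : IsOpen X) {n : ℕ} {G : ℝ × (Fin (n + 1) → ℝ) → ℝ}
    (hG : ContDiffOn ℝ (⊤ : ℕ∞) G (U X n)) {P : ℝ × (Fin (n + 2) → ℝ)} (hP : P ∈ U X (n + 1))
    (w : ℝ × (Fin (n + 2) → ℝ)) :
    fderiv ℝ (DG n G) P w
      = fderiv ℝ (fun y => fderiv ℝ G y (1, 0)) (trL n P) (trL n w)
        + ∑ j : Fin (n + 1), (w.2 j.succ * fderiv ℝ G (trL n P) (0, Pi.single j 1)
            + P.2 j.succ * fderiv ℝ (fun y => fderiv ℝ G y (0, Pi.single j 1)) (trL n P) (trL n w)) := by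
  have htrP : trL n P ∈ U X n := trL_mapsTo n hP
  have hdd : ∀ v : ℝ × (Fin (n + 1) → ℝ),
      DifferentiableAt ℝ (fun y => fderiv ℝ G y v) (trL n P) := fun v =>
    ((contDiffOn_dd hX hG v).differentiableOn (by simp)).differentiableAt
      ((isOpen_U hX n).mem_nhds htrP)
  have hcomp : ∀ v : ℝ × (Fin (n + 1) → ℝ), HasFDerivAt (fun p => fderiv ℝ G (trL n p) v)
      ((fderiv ℝ (fun y => fderiv ℝ G y v) (trL n P)).comp (trL n)) P := fun v =>
    (hdd v).hasFDerivAt.comp P (trL n).hasFDerivAt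
  have hcj : ∀ j : Fin (n + 1), HasFDerivAt (fun p : ℝ × (Fin (n + 2) → ℝ) => p.2 j.succ)
      ((ContinuousLinearMap.proj (R := ℝ) (φ := fun _ : Fin (n + 2) => ℝ) j.succ).comp
        (ContinuousLinearMap.snd ℝ ℝ (Fin (n + 2) → ℝ))) P := fun j =>
    ((ContinuousLinearMap.proj (R := ℝ) (φ := fun _ : Fin (n + 2) => ℝ) j.succ).comp
        (ContinuousLinearMap.snd ℝ ℝ (Fin (n + 2) → ℝ))).hasFDerivAt
  have hmul : ∀ j ∈ Finset.univ (α := Fin (n + 1)), HasFDerivAt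
      (fun p : ℝ × (Fin (n + 2) → ℝ) => p.2 j.succ * fderiv ℝ G (trL n p) (0, Pi.single j 1))
      (P.2 j.succ • ((fderiv ℝ (fun y => fderiv ℝ G y (0, Pi.single j 1)) (trL n P)).comp (trL n))
        + fderiv ℝ G (trL n P) (0, Pi.single j 1) •
          ((ContinuousLinearMap.proj (R := ℝ) (φ := fun _ : Fin (n + 2) => ℝ) j.succ).comp
            (ContinuousLinearMap.snd ℝ ℝ (Fin (n + 2) → ℝ)))) P := fun j _ =>
    (hcj j).mul (hcomp _)
  have htotal := (hcomp (1, 0)).fun_add (HasFDerivAt.fun_sum hmul)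
  rw [show fderiv ℝ (DG n G) P = _ from htotal.fderiv]
  simp only [ContinuousLinearMap.add_apply, ContinuousLinearMap.coe_sum',
    Finset.sum_apply, ContinuousLinearMap.add_apply, ContinuousLinearMap.smul_apply,
    ContinuousLinearMap.comp_apply, smul_eq_mul, ContinuousLinearMap.coe_snd',
    ContinuousLinearMap.proj_apply]
  congr 1
  refine Finset.sum_congr rfl fun j _ => ?_
  ring


lemma congr_pdx (hX : IsOpen X) {a b : QFun}
    (hcong : ∀ x ∈ X, ∀ q : ℕ → ℝ, 0 < q 0 → a x q = b x q)
    {x : ℝ} {q : ℕ → ℝ} (hx : x ∈ X) (hq : 0 < q 0) : pdx a x q = pdx b x q := by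
  show deriv _ _ = deriv _ _
  apply Filter.EventuallyEq.deriv_eq
  filter_upwards [hX.mem_nhds hx] with t ht
  exact hcong t ht q hq

lemma congr_pd {a b : QFun}
    (hcong : ∀ x ∈ X, ∀ q : ℕ → ℝ, 0 < q 0 → a x q = b x q)
    {x : ℝ} {q : ℕ → ℝ} (hx : x ∈ X) (hq : 0 < q 0) (k : ℕ) : pd k a x q = pd k b x q := by
  show deriv _ _ = deriv _ _
  apply Filter.EventuallyEq.deriv_eq
  filter_upwards [ev_update_pos hq k] with t ht
  exact hcong x hx _ ht

lemma congr_dop (hX : IsOpen X) {a b : QFun}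
    (hcong : ∀ x ∈ X, ∀ q : ℕ → ℝ, 0 < q 0 → a x q = b x q)
    {x : ℝ} {q : ℕ → ℝ} (hx : x ∈ X) (hq : 0 < q 0) : Dop a x q = Dop b x q := by
  show pdx a x q + _ = pdx b x q + _
  rw [congr_pdx hX hcong hx hq]
  congr 1
  exact tsum_congr fun k => by rw [congr_pd hcong hx hq k]

lemma congr_iter (hX : IsOpen X) {a b : QFun}
    (hcong : ∀ x ∈ X, ∀ q : ℕ → ℝ, 0 < q 0 → a x q = b x q) (i : ℕ) :
    ∀ x ∈ X, ∀ q : ℕ → ℝ, 0 < q 0 → Dop^[i] a x q = Dop^[i] b x q := by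
  induction i with
  | zero => exact hcong
  | succ i ih =>
    intro x hx q hq
    rw [Function.iterate_succ_apply', Function.iterate_succ_apply']
    exact congr_dop hX ih hx hq

lemma dop_vanish (hX : IsOpen X) {g : QFun}
    (h : ∀ x ∈ X, ∀ q : ℕ → ℝ, 0 < q 0 → g x q = 0)
    {x : ℝ} {q : ℕ → ℝ} (hx : x ∈ X) (hq : 0 < q 0) : Dop g x q = 0 := by
  have hrep : QRep X 0 (fun _ => (0 : ℝ)) g := ⟨contDiffOn_const, fun x hx q hq => h x hx q hq⟩
  rw [dop_eval hX hrep hx hq]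
  simp

lemma iter_vanish (hX : IsOpen X) {g : QFun}
    (h : ∀ x ∈ X, ∀ q : ℕ → ℝ, 0 < q 0 → g x q = 0) (i : ℕ) :
    ∀ x ∈ X, ∀ q : ℕ → ℝ, 0 < q 0 → Dop^[i] g x q = 0 := by
  induction i with
  | zero => exact h
  | succ i ih =>
    intro x hx q hq
    rw [Function.iterate_succ_apply']
    exact dop_vanish hX ih hx hq

lemma pr_succ (n : ℕ) (q : ℕ → ℝ) (j : Fin (n + 1)) :
    pr (n + 1) q j.succ = q (j.val + 1) := rfl

lemma comm_main (hX : IsOpen X) {n G g} (h : QRep X n G g) {x : ℝ} {q : ℕ → ℝ}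
    (hx : x ∈ X) (hq : 0 < q 0) {k : ℕ} (hk1 : 1 ≤ k) :
    pd k (Dop g) x q = Dop (pd k g) x q + pd (k - 1) g x q := by
  have hDg := h.dop hX
  rcases lt_or_ge k (n + 1) with hkn | hkn
  · set j0 : Fin (n + 1) := ⟨k, hkn⟩ with hj0
    set jm : Fin (n + 1) := ⟨k - 1, by omega⟩ with hjm
    set K : Fin (n + 2) := ⟨k, by omega⟩ with hK
    have h1 : pd k (Dop g) x q = fderiv ℝ (DG n G) (x, pr (n + 1) q) (0, Pi.single K 1) :=
      pd_eq hX hDg hx hq K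
    have htrw : trL n ((0 : ℝ), (Pi.single K 1 : Fin (n + 2) → ℝ))
        = ((0 : ℝ), (Pi.single j0 1 : Fin (n + 1) → ℝ)) := by
      rw [trL_apply]
      refine Prod.ext rfl (funext fun i => ?_)
      dsimp only
      simp [Pi.single_apply, Fin.ext_iff, hK, hj0]
    rw [h1, fderiv_DG hX h.1 (mem_U hx hq), trL_pr, htrw,
      fderiv_swap hX h.1 (mem_U hx hq) (0, Pi.single j0 1) ((1 : ℝ), 0)]
    dsimp only
    rw [Finset.sum_add_distrib]
    have hdelta : (∑ j : Fin (n + 1), (Pi.single K 1 : Fin (n + 2) → ℝ) j.succ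
        * fderiv ℝ G (x, pr n q) (0, Pi.single j 1))
        = fderiv ℝ G (x, pr n q) (0, Pi.single jm 1) := by
      rw [Finset.sum_eq_single jm]
      · have hjmK : jm.succ = K := by
          apply Fin.ext; simp only [Fin.val_succ, hjm, hK]; omega
        rw [hjmK, Pi.single_eq_same, one_mul]
      · intro j _ hj
        have hne : j.succ ≠ K := by
          intro hc
          apply hj
          apply Fin.ext
          have hvc := congrArg Fin.val hc
          simp only [Fin.val_succ, hK] at hvc
          simp only [hjm]
          omega
        rw [Pi.single_eq_of_ne hne, zero_mul]
      · intro habs; exact absurd (Finset.mem_univ jm) habs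
    have hswap : ∀ j : Fin (n + 1), pr (n + 1) q j.succ
        * fderiv ℝ (fun y => fderiv ℝ G y (0, Pi.single j 1)) (x, pr n q) (0, Pi.single j0 1)
        = q (j.val + 1)
          * fderiv ℝ (fun y => fderiv ℝ G y (0, Pi.single j0 1)) (x, pr n q) (0, Pi.single j 1) :=
      fun j => by rw [fderiv_swap hX h.1 (mem_U hx hq), pr_succ]
    rw [hdelta, Finset.sum_congr rfl fun j _ => hswap j]
    have hD : Dop (pd k g) x q
        = fderiv ℝ (fun y => fderiv ℝ G y (0, Pi.single j0 1)) (x, pr n q) (1, 0)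
          + ∑ j : Fin (n + 1), q (j.val + 1)
            * fderiv ℝ (fun y => fderiv ℝ G y (0, Pi.single j0 1)) (x, pr n q)
              (0, Pi.single j 1) := dop_eval hX (h.pd hX j0) hx hq
    have hpdm : pd (k - 1) g x q = fderiv ℝ G (x, pr n q) (0, Pi.single jm 1) :=
      pd_eq hX h hx hq jm
    rw [hD, hpdm]
    ring
  · have hz : ∀ x ∈ X, ∀ q : ℕ → ℝ, 0 < q 0 → pd k g x q = 0 := fun x hx q hq =>
      pd_high h hx hq hkn
    have hDz : Dop (pd k g) x q = 0 := dop_vanish hX hz hx hq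
    rcases eq_or_lt_of_le hkn with hke | hkl
    · set jm : Fin (n + 1) := ⟨n, by omega⟩ with hjm
      set K : Fin (n + 2) := ⟨k, by omega⟩ with hK
      have h1 : pd k (Dop g) x q = fderiv ℝ (DG n G) (x, pr (n + 1) q) (0, Pi.single K 1) :=
        pd_eq hX hDg hx hq K
      have htrw : trL n ((0 : ℝ), (Pi.single K 1 : Fin (n + 2) → ℝ)) = 0 := by
        rw [trL_apply]
        refine Prod.ext rfl (funext fun i => ?_)
        dsimp only
        rw [show (0 : ℝ × (Fin (n+1) → ℝ)).2 i = 0 from rfl]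
        apply Pi.single_eq_of_ne
        intro hc
        have hvc := congrArg Fin.val hc
        simp only [Fin.coe_castSucc, hK] at hvc
        omega
      rw [h1, fderiv_DG hX h.1 (mem_U hx hq), trL_pr, htrw]
      simp only [map_zero, zero_add]
      have hcg : ∀ j : Fin (n + 1), (Pi.single K 1 : Fin (n + 2) → ℝ) j.succ
          * fderiv ℝ G (x, pr n q) (0, Pi.single j 1) + pr (n + 1) q j.succ * 0
          = (Pi.single K 1 : Fin (n + 2) → ℝ) j.succ
            * fderiv ℝ G (x, pr n q) (0, Pi.single j 1) := fun j => by ring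
      rw [Finset.sum_congr rfl fun j _ => hcg j]
      have hdelta : (∑ j : Fin (n + 1), (Pi.single K 1 : Fin (n + 2) → ℝ) j.succ
          * fderiv ℝ G (x, pr n q) (0, Pi.single j 1))
          = fderiv ℝ G (x, pr n q) (0, Pi.single jm 1) := by
        rw [Finset.sum_eq_single jm]
        · have hjmK : jm.succ = K := by
            apply Fin.ext; simp only [Fin.val_succ, hjm, hK]; omega
          rw [hjmK, Pi.single_eq_same, one_mul]
        · intro j _ hj
          have hne : j.succ ≠ K := by
            intro hc
            apply hj
            apply Fin.ext
            have hvc := congrArg Fin.val hc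
            simp only [Fin.val_succ, hK] at hvc
            simp only [hjm]
            omega
          rw [Pi.single_eq_of_ne hne, zero_mul]
        · intro habs; exact absurd (Finset.mem_univ jm) habs
      rw [hdelta, hDz]
      have hpdm : pd (k - 1) g x q = fderiv ℝ G (x, pr n q) (0, Pi.single jm 1) := by
        have hpe := pd_eq hX h hx hq jm
        have hv : jm.val = k - 1 := by simp only [hjm]; omega
        rw [hv] at hpe
        exact hpe
      rw [hpdm]
      ring
    · have h0 : pd k (Dop g) x q = 0 := pd_high hDg hx hq (by omega)
      have h2 : pd (k - 1) g x q = 0 := pd_high h hx hq (by omega)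
      rw [h0, h2, hDz]
      ring


lemma QRep.add {n Ga Gb} {a b : QFun} (ha : QRep X n Ga a) (hb : QRep X n Gb b) :
    QRep X n (fun p => Ga p + Gb p) (fun x q => a x q + b x q) :=
  ⟨ha.1.add hb.1, fun x hx q hq => by
    show a x q + b x q = Ga (x, pr n q) + Gb (x, pr n q)
    rw [ha.2 x hx q hq, hb.2 x hx q hq]⟩

lemma QRep.smul (c : ℝ) {n Ga} {a : QFun} (ha : QRep X n Ga a) :
    QRep X n (fun p => c * Ga p) (fun x q => c * a x q) :=
  ⟨contDiffOn_const.mul ha.1, fun x hx q hq => by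
    show c * a x q = c * Ga (x, pr n q)
    rw [ha.2 x hx q hq]⟩

lemma QRep.up (hX : IsOpen X) {n G g} (h : QRep X n G g) :
    QRep X (n + 1) (fun p => G (trL n p)) g := by
  refine ⟨h.1.comp (trL n).contDiff.contDiffOn (trL_mapsTo n), fun x hx q hq => ?_⟩
  rw [h.2 x hx q hq]
  exact congrArg G (trL_pr n x q).symm

lemma QRep.liftAdd (hX : IsOpen X) {n G g} (h : QRep X n G g) (k : ℕ) :
    ∃ G', QRep X (n + k) G' g := by
  induction k with
  | zero => exact ⟨G, h⟩
  | succ k ih => obtain ⟨G', h'⟩ := ih; exact ⟨_, h'.up hX⟩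

lemma QRep.liftTo (hX : IsOpen X) {n G g} (h : QRep X n G g) {n' : ℕ} (hn : n ≤ n') :
    ∃ G', QRep X n' G' g := by
  obtain ⟨k, rfl⟩ := Nat.exists_eq_add_of_le hn
  exact h.liftAdd hX k

lemma HasRep.common {a b : QFun} (hX : IsOpen X) (ha : HasRep X a) (hb : HasRep X b) :
    ∃ n Ga Gb, QRep X n Ga a ∧ QRep X n Gb b := by
  obtain ⟨na, Ga, hra⟩ := ha
  obtain ⟨nb, Gb, hrb⟩ := hb
  obtain ⟨Ga', hGa'⟩ := hra.liftTo hX (le_max_left na nb)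
  obtain ⟨Gb', hGb'⟩ := hrb.liftTo hX (le_max_right na nb)
  exact ⟨max na nb, Ga', Gb', hGa', hGb'⟩

lemma HasRep.pd (hX : IsOpen X) {g : QFun} (h : HasRep X g) (k : ℕ) :
    HasRep X (pd k g) := by
  obtain ⟨n, G, hr⟩ := h
  rcases lt_or_ge k (n + 1) with hk | hk
  · exact ⟨n, _, hr.pd hX ⟨k, hk⟩⟩
  · exact ⟨n, fun _ => 0, contDiffOn_const, fun x hx q hq => pd_high hr hx hq hk⟩

lemma HasRep.dop (hX : IsOpen X) {g : QFun} (h : HasRep X g) : HasRep X (Dop g) := by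
  obtain ⟨n, G, hr⟩ := h
  exact ⟨n + 1, _, hr.dop hX⟩

lemma HasRep.iter (hX : IsOpen X) {g : QFun} (h : HasRep X g) (i : ℕ) :
    HasRep X (Dop^[i] g) := by
  induction i with
  | zero => exact h
  | succ i ih => rw [Function.iterate_succ_apply']; exact ih.dop hX

lemma HasRep.smul {g : QFun} (h : HasRep X g) (c : ℝ) :
    HasRep X (fun x q => c * g x q) := by
  obtain ⟨n, G, hr⟩ := h
  exact ⟨n, _, hr.smul c⟩

lemma HasRep.add {a b : QFun} (hX : IsOpen X) (ha : HasRep X a) (hb : HasRep X b) :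
    HasRep X (fun x q => a x q + b x q) := by
  obtain ⟨n, Ga, Gb, hra, hrb⟩ := ha.common hX hb
  exact ⟨n, _, hra.add hrb⟩

lemma dop_add (hX : IsOpen X) {a b : QFun} (ha : HasRep X a) (hb : HasRep X b)
    {x : ℝ} {q : ℕ → ℝ} (hx : x ∈ X) (hq : 0 < q 0) :
    Dop (fun x q => a x q + b x q) x q = Dop a x q + Dop b x q := by
  obtain ⟨n, Ga, Gb, hra, hrb⟩ := ha.common hX hb
  have hrab := hra.add hrb
  rw [dop_eval hX hrab hx hq, dop_eval hX hra hx hq, dop_eval hX hrb hx hq]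
  have hda : DifferentiableAt ℝ Ga (x, pr n q) := hra.diffAt hX (mem_U hx hq)
  have hdb : DifferentiableAt ℝ Gb (x, pr n q) := hrb.diffAt hX (mem_U hx hq)
  rw [fderiv_fun_add hda hdb]
  simp only [ContinuousLinearMap.add_apply, mul_add]
  rw [Finset.sum_add_distrib]
  ring

lemma dop_smul (hX : IsOpen X) (c : ℝ) {g : QFun} (hg : HasRep X g)
    {x : ℝ} {q : ℕ → ℝ} (hx : x ∈ X) (hq : 0 < q 0) :
    Dop (fun x q => c * g x q) x q = c * Dop g x q := by
  obtain ⟨n, G, hr⟩ := hg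
  rw [dop_eval hX (hr.smul c) hx hq, dop_eval hX hr hx hq]
  have hd : DifferentiableAt ℝ G (x, pr n q) := hr.diffAt hX (mem_U hx hq)
  rw [fderiv_const_mul hd c]
  simp only [ContinuousLinearMap.smul_apply, smul_eq_mul]
  rw [mul_add, Finset.mul_sum]
  congr 1
  exact Finset.sum_congr rfl fun j _ => by ring

lemma HasRep.sum {ι : Type*} (hX : IsOpen X) (s : Finset ι) (g : ι → QFun)
    (hg : ∀ i ∈ s, HasRep X (g i)) :
    HasRep X (fun x q => ∑ i ∈ s, g i x q) := by
  classical
  induction s using Finset.induction with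
  | empty =>
    exact ⟨0, fun _ => 0, contDiffOn_const, fun x hx q hq => by simp⟩
  | @insert a s hni ih =>
    simp only [Finset.sum_insert hni]
    exact (hg a (Finset.mem_insert_self a s)).add hX
      (ih fun i hi => hg i (Finset.mem_insert_of_mem hi))

lemma dop_sum {ι : Type*} (hX : IsOpen X) (s : Finset ι) (g : ι → QFun)
    (hg : ∀ i ∈ s, HasRep X (g i)) {x : ℝ} {q : ℕ → ℝ} (hx : x ∈ X) (hq : 0 < q 0) :
    Dop (fun x q => ∑ i ∈ s, g i x q) x q = ∑ i ∈ s, Dop (g i) x q := by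
  classical
  induction s using Finset.induction with
  | empty =>
    rw [Finset.sum_empty]
    have : ∀ x ∈ X, ∀ q : ℕ → ℝ, 0 < q 0 →
        (fun (x : ℝ) (q : ℕ → ℝ) => ∑ i ∈ (∅ : Finset ι), g i x q) x q = 0 := by
      intro x hx q hq; simp
    exact dop_vanish hX this hx hq
  | @insert a s hni ih =>
    have h1 : ∀ x ∈ X, ∀ q : ℕ → ℝ, 0 < q 0 →
        (fun (x : ℝ) (q : ℕ → ℝ) => ∑ i ∈ insert a s, g i x q) x q
          = (fun (x : ℝ) (q : ℕ → ℝ) => g a x q + ∑ i ∈ s, g i x q) x q := by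
      intro x hx q hq; simp [Finset.sum_insert hni]
    rw [congr_dop hX h1 hx hq,
      dop_add hX (hg a (Finset.mem_insert_self a s))
        (HasRep.sum hX s g fun i hi => hg i (Finset.mem_insert_of_mem hi)) hx hq,
      ih fun i hi => hg i (Finset.mem_insert_of_mem hi), Finset.sum_insert hni]

lemma iter_add (hX : IsOpen X) {a b : QFun} (ha : HasRep X a) (hb : HasRep X b) (i : ℕ) :
    ∀ x ∈ X, ∀ q : ℕ → ℝ, 0 < q 0 →
      Dop^[i] (fun x q => a x q + b x q) x q = Dop^[i] a x q + Dop^[i] b x q := by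
  induction i with
  | zero => intro x hx q hq; rfl
  | succ i ih =>
    intro x hx q hq
    rw [Function.iterate_succ_apply', Function.iterate_succ_apply',
      Function.iterate_succ_apply']
    rw [congr_dop hX ih hx hq]
    exact dop_add hX (ha.iter hX i) (hb.iter hX i) hx hq

lemma tsum_shift (c : ℕ → ℝ) (a L : ℕ) (h0 : ∀ k < a, c k = 0) (h1 : ∀ k, a + L ≤ k → c k = 0) :
    ∑' k, c k = ∑ i ∈ Finset.range L, c (a + i) := by
  rw [tsum_eq_sum (s := Finset.Ico a (a + L)) (f := c) (fun k hk => by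
    rw [Finset.mem_Ico] at hk
    rcases lt_or_ge k a with h | h
    · exact h0 k h
    · exact h1 k (by omega))]
  rw [Finset.sum_Ico_eq_sum_range, Nat.add_sub_cancel_left]

end Stmt5Aux

/-- For every integer `r ≥ 0` and every q-function `f`:
`D (B_r f) = ∂f/∂q_r - B_{r-1} f` and `B_r (D f) = ∂f/∂q_r`. -/
theorem stmt5 (X : Set ℝ) (hX : IsOpenInterval X) (m : ℕ) (f : QFun)
    (hf : IsQFunc X m f) (r : ℕ) :
    (∀ x ∈ X, ∀ q : ℕ → ℝ, 0 < q 0 →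
      Dop (Bop (r : ℤ) f) x q = pd r f x q - Bop ((r : ℤ) - 1) f x q) ∧
    (∀ x ∈ X, ∀ q : ℕ → ℝ, 0 < q 0 →
      Bop (r : ℤ) (Dop f) x q = pd r f x q) := by
  obtain ⟨hXo, -, -⟩ := hX
  obtain ⟨F, hF, hFeq⟩ := hf
  have hfr : Stmt5Aux.QRep X m F f := ⟨hF, fun x hx q hq => hFeq x q⟩
  have hfrep : Stmt5Aux.HasRep X f := ⟨m, F, hfr⟩
  have hvanish : ∀ k, m + 1 ≤ k → ∀ i, ∀ x ∈ X, ∀ q : ℕ → ℝ, 0 < q 0 →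
      Dop^[i] (pd k f) x q = 0 := fun k hk i =>
    Stmt5Aux.iter_vanish hXo (fun x hx q hq => Stmt5Aux.pd_high hfr hx hq hk) i
  set L := m + 2 with hL
  constructor
  · intro x hx q hq
    have hBS : ∀ x ∈ X, ∀ q : ℕ → ℝ, 0 < q 0 → Bop (r : ℤ) f x q
        = ∑ i ∈ Finset.range L, (-1:ℝ)^i * Dop^[i] (pd (r+1+i) f) x q := by
      intro x hx q hq
      show (∑' k : ℕ, if (r : ℤ) + 1 ≤ (k : ℤ) then
          (-1 : ℝ) ^ ((k : ℤ) - 1 - (r:ℤ)).toNat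
            * Dop^[((k : ℤ) - 1 - (r:ℤ)).toNat] (pd k f) x q else 0) = _
      rw [Stmt5Aux.tsum_shift _ (r+1) L ?h0 ?h1]
      · refine Finset.sum_congr rfl fun i _ => ?_
        rw [if_pos (by push_cast; omega)]
        have hT : (((r+1+i : ℕ) : ℤ) - 1 - (r:ℤ)).toNat = i := by omega
        rw [hT]
      case h0 => intro k hk; rw [if_neg (by push_cast; omega)]
      case h1 =>
        intro k hk
        rw [if_pos (by push_cast; omega), hvanish k (by omega) _ x hx q hq, mul_zero]
    rw [Stmt5Aux.congr_dop hXo hBS hx hq]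
    have hreps : ∀ i : ℕ,
        Stmt5Aux.HasRep X (fun x q => (-1:ℝ)^i * Dop^[i] (pd (r+1+i) f) x q) :=
      fun i => ((hfrep.pd hXo (r+1+i)).iter hXo i).smul ((-1:ℝ)^i)
    rw [Stmt5Aux.dop_sum hXo (Finset.range L) _ (fun i _ => hreps i) hx hq]
    have hDterm : ∀ i ∈ Finset.range L,
        Dop (fun x q => (-1:ℝ)^i * Dop^[i] (pd (r+1+i) f) x q) x q
        = (-1:ℝ)^i * Dop^[i+1] (pd (r+1+i) f) x q := fun i _ => by
      rw [Stmt5Aux.dop_smul hXo _ ((hfrep.pd hXo (r+1+i)).iter hXo i) hx hq,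
        ← Function.iterate_succ_apply' Dop i (pd (r+1+i) f)]
    rw [Finset.sum_congr rfl hDterm]
    have hBm : Bop ((r : ℤ) - 1) f x q
        = ∑ i ∈ Finset.range (L+1), (-1:ℝ)^i * Dop^[i] (pd (r+i) f) x q := by
      show (∑' k : ℕ, if (r : ℤ) - 1 + 1 ≤ (k : ℤ) then
          (-1 : ℝ) ^ ((k : ℤ) - 1 - ((r:ℤ)-1)).toNat
            * Dop^[((k : ℤ) - 1 - ((r:ℤ)-1)).toNat] (pd k f) x q else 0) = _
      rw [Stmt5Aux.tsum_shift _ r (L+1) ?h0 ?h1]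
      · refine Finset.sum_congr rfl fun i _ => ?_
        rw [if_pos (by push_cast; omega)]
        have hT : (((r+i : ℕ) : ℤ) - 1 - ((r:ℤ)-1)).toNat = i := by omega
        rw [hT]
      case h0 => intro k hk; rw [if_neg (by push_cast; omega)]
      case h1 =>
        intro k hk
        rw [if_pos (by push_cast; omega), hvanish k (by omega) _ x hx q hq, mul_zero]
    rw [hBm, Finset.sum_range_succ' (fun i => (-1:ℝ)^i * Dop^[i] (pd (r+i) f) x q) L]
    simp only [pow_zero, one_mul, Nat.add_zero, Function.iterate_zero, id_eq]
    have hshift : ∀ i ∈ Finset.range L, (-1:ℝ)^(i+1) * Dop^[i+1] (pd (r+(i+1)) f) x q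
        = -((-1:ℝ)^i * Dop^[i+1] (pd (r+1+i) f) x q) := fun i _ => by
      rw [show r + (i+1) = r+1+i by omega]; ring
    rw [Finset.sum_congr rfl hshift, Finset.sum_neg_distrib]
    ring
  · intro x hx q hq
    have hDf := hfr.dop hXo
    show (∑' k : ℕ, if (r : ℤ) + 1 ≤ (k : ℤ) then
        (-1 : ℝ) ^ ((k : ℤ) - 1 - (r:ℤ)).toNat
          * Dop^[((k : ℤ) - 1 - (r:ℤ)).toNat] (pd k (Dop f)) x q else 0) = _
    rw [Stmt5Aux.tsum_shift _ (r+1) L ?h0 ?h1]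
    case h0 => intro k hk; rw [if_neg (by push_cast; omega)]
    case h1 =>
      intro k hk
      rw [if_pos (by push_cast; omega)]
      have hz : ∀ x ∈ X, ∀ q : ℕ → ℝ, 0 < q 0 → pd k (Dop f) x q = 0 :=
        fun x hx q hq => Stmt5Aux.pd_high hDf hx hq (by omega)
      rw [Stmt5Aux.iter_vanish hXo hz _ x hx q hq, mul_zero]
    have hterm : ∀ i ∈ Finset.range L, (if (r:ℤ)+1 ≤ ((r+1+i : ℕ) : ℤ) then
        (-1:ℝ) ^ (((r+1+i:ℕ) : ℤ) - 1 - (r:ℤ)).toNat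
          * Dop^[(((r+1+i:ℕ) : ℤ) - 1 - (r:ℤ)).toNat] (pd (r+1+i) (Dop f)) x q else 0)
        = ((-1:ℝ)^i * Dop^[i] (pd (r+i) f) x q)
          - ((-1:ℝ)^(i+1) * Dop^[i+1] (pd (r+(i+1)) f) x q) := by
      intro i _
      rw [if_pos (by push_cast; omega)]
      have hT : (((r+1+i : ℕ) : ℤ) - 1 - (r:ℤ)).toNat = i := by omega
      rw [hT]
      have hcomm : ∀ x ∈ X, ∀ q : ℕ → ℝ, 0 < q 0 → pd (r+1+i) (Dop f) x q
          = (fun x q => Dop (pd (r+1+i) f) x q + pd (r+i) f x q) x q := by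
        intro x hx q hq
        have hc := Stmt5Aux.comm_main hXo hfr hx hq (k := r+1+i) (by omega)
        simpa [show r+1+i-1 = r+i by omega] using hc
      rw [Stmt5Aux.congr_iter hXo hcomm i x hx q hq,
        Stmt5Aux.iter_add hXo ((hfrep.pd hXo (r+1+i)).dop hXo) (hfrep.pd hXo (r+i)) i x hx q hq,
        ← Function.iterate_succ_apply Dop i (pd (r+1+i) f)]
      rw [show r + (i+1) = r+1+i by omega]
      ring
    rw [Finset.sum_congr rfl hterm, Finset.sum_range_sub']
    rw [hvanish (r+L) (by omega) L x hx q hq]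
    simp

end
end
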